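/- arXiv:0908.2988 — 5 statements merged into one kernel-verified Lean document; each statement's English description precedes it below -/
import Mathlib

section
/- For every megamatroid rk on the ground set {1,…,d}, the base polyhedron Q(rk) is a nonempty subset of ℝ^d. -/
open scoped BigOperators

/-- A megamatroid on the ground set `{1,…,d}` (modeled as `Fin d`): a function from
subsets to `ℤ ∪ {∞}` with `rk ∅ = 0`, `rk univ` finite, and submodularity on finite values. -/
structure Megamatroid (d : ℕ) where
  rk : Finset (Fin d) → WithTop ℤ
  rk_empty : rk ∅ = 0
  rk_univ_ne_top : rk Finset.univ ≠ ⊤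
  submodular : ∀ A B : Finset (Fin d), rk A ≠ ⊤ → rk B ≠ ⊤ →
    rk (A ∪ B) ≠ ⊤ ∧ rk (A ∩ B) ≠ ⊤ ∧ rk (A ∪ B) + rk (A ∩ B) ≤ rk A + rk B

/-- The base polyhedron `Q(rk)` of a megamatroid: points `y ∈ ℝ^d` with
`∑ i, y i = rk(univ)` and `∑ i ∈ A, y i ≤ rk A` whenever `rk A` is finite. -/
def megaQ {d : ℕ} (M : Megamatroid d) : Set (Fin d → ℝ) :=
  {y | (∀ z : ℤ, M.rk Finset.univ = (z : WithTop ℤ) → ∑ i, y i = (z : ℝ)) ∧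
    ∀ A : Finset (Fin d), ∀ z : ℤ, M.rk A = (z : WithTop ℤ) → ∑ i ∈ A, y i ≤ (z : ℝ)}

/-!
Extend the rank function to a finite submodular function `g ≤ rk` with `g ∅ = 0` and
`g univ = rk univ` by `g A = min {rk B + K · #(B \ A) | A ⊆ B, rk B < ∞}`, with a penalty `K`
large enough that `g ∅ = 0`. Submodularity of `g` follows from that of `rk`, because the penalty
`#(B \ A)` is itself submodular in the pair `(A, B)`. The greedy vector of `g` along the chain
`∅ ⊂ {1} ⊂ {1, 2} ⊂ ⋯` then satisfies `∑_{i ∈ A} y_i ≤ g A ≤ rk A` by submodularity and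
`∑ y_i = g univ = rk univ` by telescoping.
-/

open Finset

def IsSubmodular {α β : Type*} [DecidableEq α] [Add β] [LE β] (g : Finset α → β) : Prop :=
  ∀ A B, g (A ∪ B) + g (A ∩ B) ≤ g A + g B

section Greedy

variable {α β : Type*} [LinearOrder α] [LocallyFiniteOrderBot α] [AddCommGroup β]

def greedyVector (g : Finset α → β) (a : α) : β :=
  g (Iic a) - g (Iio a)

theorem sum_greedyVector_of_isLowerSet (g : Finset α → β) {A : Finset α}
    (hA : IsLowerSet (A : Set α)) : ∑ a ∈ A, greedyVector g a = g A - g ∅ := by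
  induction A using Finset.induction_on_max with
  | empty => simp
  | insert a s hlt ih =>
    have hs : s = Iio a := by
      ext x
      refine ⟨fun hx => mem_Iio.mpr (hlt x hx), fun hx => ?_⟩
      have hx' : x ∈ insert a s := hA (mem_Iio.mp hx).le (by simp)
      exact (mem_insert.mp hx').resolve_left (mem_Iio.mp hx).ne
    subst hs
    rw [sum_insert (by simp), ih (by simpa using isLowerSet_Iio a), greedyVector, Iio_insert]
    abel

theorem sum_greedyVector_univ [Fintype α] (g : Finset α → β) :
    ∑ a, greedyVector g a = g univ - g ∅ :=
  sum_greedyVector_of_isLowerSet g (by simpa using isLowerSet_univ)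

theorem sum_greedyVector_le [PartialOrder β] [IsOrderedAddMonoid β] {g : Finset α → β}
    (hg : IsSubmodular g) (A : Finset α) : ∑ a ∈ A, greedyVector g a ≤ g A - g ∅ := by
  induction A using Finset.induction_on_max with
  | empty => simp
  | insert a s hlt ih =>
    have hs : s ⊆ Iio a := fun x hx => mem_Iio.mpr (hlt x hx)
    have hunion : Iio a ∪ insert a s = Iic a := by
      rw [← Iio_insert, union_insert, union_eq_left.mpr hs]
    have hinter : Iio a ∩ insert a s = s := by
      rw [inter_insert_of_notMem (by simp), inter_eq_right.mpr hs]
    have hsub := hg (Iio a) (insert a s)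
    rw [hunion, hinter] at hsub
    rw [sum_insert fun ha => (hlt a ha).false]
    calc greedyVector g a + ∑ x ∈ s, greedyVector g x
        ≤ g (Iic a) - g (Iio a) + (g s - g ∅) := add_le_add_right ih _
      _ = g (Iic a) + g s - (g (Iio a) + g ∅) := by abel
      _ ≤ g (Iio a) + g (insert a s) - (g (Iio a) + g ∅) := sub_le_sub_right hsub _
      _ = g (insert a s) - g ∅ := by abel

end Greedy

theorem card_sdiff_union_add_card_sdiff_inter_le {α : Type*} [DecidableEq α]
    (A A' B B' : Finset α) :
    #((B ∪ B') \ (A ∪ A')) + #((B ∩ B') \ (A ∩ A')) ≤ #(B \ A) + #(B' \ A') := by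
  set X := (B ∪ B') \ (A ∪ A')
  set Y := (B ∩ B') \ (A ∩ A')
  have hunion : X ∪ Y ⊆ (B \ A) ∪ (B' \ A') := by
    intro x; simp only [X, Y, mem_union, mem_sdiff, mem_inter]; tauto
  have hinter : X ∩ Y ⊆ (B \ A) ∩ (B' \ A') := by
    intro x; simp only [X, Y, mem_union, mem_sdiff, mem_inter]; tauto
  calc #X + #Y = #(X ∪ Y) + #(X ∩ Y) := (card_union_add_card_inter X Y).symm
    _ ≤ #((B \ A) ∪ (B' \ A')) + #((B \ A) ∩ (B' \ A')) :=
      add_le_add (card_le_card hunion) (card_le_card hinter)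
    _ = #(B \ A) + #(B' \ A') := card_union_add_card_inter _ _

namespace Megamatroid

variable {d : ℕ} (M : Megamatroid d)

/-- The rank as an integer, with the junk value `0` where it is infinite. -/
def rkInt (A : Finset (Fin d)) : ℤ := (M.rk A).untopD 0

variable {M}

theorem rkInt_eq {A : Finset (Fin d)} {z : ℤ} (h : M.rk A = z) : M.rkInt A = z := by
  simp [rkInt, h]

theorem coe_rkInt {A : Finset (Fin d)} (h : M.rk A ≠ ⊤) : (M.rkInt A : WithTop ℤ) = M.rk A := by
  obtain ⟨z, hz⟩ := WithTop.ne_top_iff_exists.mp h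
  rw [← hz, rkInt_eq hz.symm]

theorem rk_empty_ne_top : M.rk ∅ ≠ ⊤ := by
  simp [M.rk_empty]

theorem rkInt_empty : M.rkInt ∅ = 0 :=
  rkInt_eq (by simp [M.rk_empty])

theorem rkInt_union_add_rkInt_inter_le {A B : Finset (Fin d)} (hA : M.rk A ≠ ⊤)
    (hB : M.rk B ≠ ⊤) : M.rkInt (A ∪ B) + M.rkInt (A ∩ B) ≤ M.rkInt A + M.rkInt B := by
  obtain ⟨hunion, hinter, hle⟩ := M.submodular A B hA hB
  rw [← coe_rkInt hA, ← coe_rkInt hB, ← coe_rkInt hunion, ← coe_rkInt hinter] at hle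
  exact_mod_cast hle

variable (M)

def penalty : ℤ := ∑ B, |M.rkInt B|

theorem penalty_nonneg : 0 ≤ M.penalty :=
  sum_nonneg fun _ _ => abs_nonneg _

theorem neg_rkInt_le_penalty (B : Finset (Fin d)) : -M.rkInt B ≤ M.penalty :=
  (neg_le_abs _).trans (single_le_sum (f := fun B => |M.rkInt B|) (fun _ _ => abs_nonneg _)
    (mem_univ B))

def finiteSupersets (A : Finset (Fin d)) : Finset (Finset (Fin d)) :=
  {B | A ⊆ B ∧ M.rk B ≠ ⊤}

theorem mem_finiteSupersets {A B : Finset (Fin d)} :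
    B ∈ M.finiteSupersets A ↔ A ⊆ B ∧ M.rk B ≠ ⊤ := by
  simp [finiteSupersets]

theorem finiteSupersets_nonempty (A : Finset (Fin d)) : (M.finiteSupersets A).Nonempty :=
  ⟨univ, M.mem_finiteSupersets.mpr ⟨subset_univ A, M.rk_univ_ne_top⟩⟩

def extendedRk (A : Finset (Fin d)) : ℤ :=
  (M.finiteSupersets A).inf' (M.finiteSupersets_nonempty A)
    fun B => M.rkInt B + M.penalty * #(B \ A)

theorem exists_extendedRk_eq (A : Finset (Fin d)) :
    ∃ B, A ⊆ B ∧ M.rk B ≠ ⊤ ∧ M.extendedRk A = M.rkInt B + M.penalty * #(B \ A) := by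
  obtain ⟨B, hB, heq⟩ := exists_mem_eq_inf' (M.finiteSupersets_nonempty A)
    fun B => M.rkInt B + M.penalty * #(B \ A)
  exact ⟨B, (M.mem_finiteSupersets.mp hB).1, (M.mem_finiteSupersets.mp hB).2, heq⟩

variable {M}

theorem extendedRk_le {A B : Finset (Fin d)} (hAB : A ⊆ B) (hB : M.rk B ≠ ⊤) :
    M.extendedRk A ≤ M.rkInt B + M.penalty * #(B \ A) :=
  inf'_le _ (M.mem_finiteSupersets.mpr ⟨hAB, hB⟩)

theorem le_extendedRk {A : Finset (Fin d)} {c : ℤ}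
    (h : ∀ B, A ⊆ B → M.rk B ≠ ⊤ → c ≤ M.rkInt B + M.penalty * #(B \ A)) :
    c ≤ M.extendedRk A :=
  le_inf' _ _ fun B hB => h B (M.mem_finiteSupersets.mp hB).1 (M.mem_finiteSupersets.mp hB).2

theorem extendedRk_le_rkInt {A : Finset (Fin d)} (hA : M.rk A ≠ ⊤) :
    M.extendedRk A ≤ M.rkInt A := by
  simpa using extendedRk_le subset_rfl hA

theorem extendedRk_empty : M.extendedRk ∅ = 0 := by
  refine le_antisymm (by simpa [rkInt_empty] using extendedRk_le subset_rfl rk_empty_ne_top) ?_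
  refine le_extendedRk fun B _ _ => ?_
  rcases B.eq_empty_or_nonempty with rfl | hB
  · simp [rkInt_empty]
  · have hcard : (1 : ℤ) ≤ #(B \ ∅) := by simpa using hB.card_pos
    nlinarith [M.neg_rkInt_le_penalty B, M.penalty_nonneg]

theorem extendedRk_univ : M.extendedRk univ = M.rkInt univ :=
  le_antisymm (extendedRk_le_rkInt M.rk_univ_ne_top) <| le_extendedRk fun B hB _ => by
    simp [univ_subset_iff.mp hB]

variable (M) in
theorem isSubmodular_extendedRk : IsSubmodular M.extendedRk := by
  intro A A'
  obtain ⟨B, hAB, hB, hgA⟩ := M.exists_extendedRk_eq A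
  obtain ⟨B', hAB', hB', hgA'⟩ := M.exists_extendedRk_eq A'
  have hunion := extendedRk_le (union_subset_union hAB hAB') (M.submodular B B' hB hB').1
  have hinter := extendedRk_le (inter_subset_inter hAB hAB') (M.submodular B B' hB hB').2.1
  have hrk := rkInt_union_add_rkInt_inter_le hB hB'
  have hcard : ((#((B ∪ B') \ (A ∪ A')) : ℕ) : ℤ) + #((B ∩ B') \ (A ∩ A'))
      ≤ #(B \ A) + #(B' \ A') := by
    exact_mod_cast card_sdiff_union_add_card_sdiff_inter_le A A' B B'
  have hpenalty := mul_le_mul_of_nonneg_left hcard M.penalty_nonneg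
  rw [hgA, hgA']
  linarith

end Megamatroid

/-- For every megamatroid, the base polyhedron `Q(rk)` is nonempty. -/
theorem megaQ_nonempty (d : ℕ) (M : Megamatroid d) : (megaQ M).Nonempty := by
  let g : Finset (Fin d) → ℝ := fun A => M.extendedRk A
  have hg : IsSubmodular g := fun A B => by
    simp only [g]; exact_mod_cast M.isSubmodular_extendedRk A B
  have hg_empty : g ∅ = 0 := by simp [g, Megamatroid.extendedRk_empty]
  refine ⟨greedyVector g, fun z hz => ?_, fun A z hz => ?_⟩
  · rw [sum_greedyVector_univ, hg_empty, sub_zero]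
    simp only [g, Megamatroid.extendedRk_univ, Megamatroid.rkInt_eq hz]
  · calc ∑ i ∈ A, greedyVector g i ≤ g A := by simpa [hg_empty] using sum_greedyVector_le hg A
      _ ≤ z := by
        have hA : M.rk A ≠ ⊤ := by simp [hz]
        simp only [g]
        exact_mod_cast (Megamatroid.extendedRk_le_rkInt hA).trans_eq (Megamatroid.rkInt_eq hz)
end

section
/- Let rk be a megamatroid on {1,…,d}, let Π = Q(rk), and let A ⊆ B ⊆ {1,…,d}. Suppose rk_Π(A) < ∞, and let F = {y ∈ Π : Σ_{i∈A} y_i = rk_Π(A)}. Then sup_{y∈F} Σ_{i∈B} y_i = rk_Π(B), where both suprema are taken in the extended reals ℝ ∪ {−∞, +∞}. -/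
open scoped BigOperators

/-- `rk_Π(S) = sup_{y ∈ Π} ∑_{i ∈ S} y i`, taken in the extended reals. -/
noncomputable def rkSet {d : ℕ} (P : Set (Fin d → ℝ)) (S : Finset (Fin d)) : EReal :=
  ⨆ y ∈ P, ((∑ i ∈ S, y i : ℝ) : EReal)

/-!
Fix `y ∈ Π` and maximize `∑_{i∈A} z_i` over the polyhedron `Π ∩ {z | ∑_{i∈B} z_i ≥ ∑_{i∈B} y_i}`;
this linear functional is bounded above there, so it attains its maximum at some `z`. Call `S` tight
at `z` if `∑_{i∈S} z_i = rk(S)`; by submodularity the tight sets form a lattice containing `∅` and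
the ground set. If some `i ∈ A` and `j ∉ A` were not separated by a tight set, moving a little mass
from `j` to `i` would stay in the polyhedron (as `i ∈ B`) and increase `∑_{i∈A} z_i`. So the tight
sets separate `A` from its complement, hence `A` is tight, which forces `z ∈ F`.

The maximum is attained because, climbing along directions that keep the active constraints
active, every point is dominated by one where the functional lies in the span of its active
constraints, and the functional takes only finitely many values at such points.
-/

open Topology

section Polyhedron

variable {ι V : Type*} [AddCommGroup V] [Module ℝ V] {f : ι → V →ₗ[ℝ] ℝ} {b : ι → ℝ}
  {g : V →ₗ[ℝ] ℝ}

lemma apply_eq_of_mem_span_of_eq {I : Set ι} (hg : g ∈ Submodule.span ℝ (f '' I)) {x y : V}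
    (hx : ∀ k ∈ I, f k x = b k) (hy : ∀ k ∈ I, f k y = b k) : g x = g y := by
  have : Submodule.span ℝ (f '' I) ≤ LinearMap.ker (Module.Dual.eval ℝ V (x - y)) :=
    Submodule.span_le.2 <| by rintro _ ⟨k, hk, rfl⟩; simp [hx k hk, hy k hk]
  simpa [sub_eq_zero] using this hg

lemma exists_add_smul_eq_of_bddAbove [Finite ι] (hbdd : BddAbove (g '' {x | ∀ k, f k x ≤ b k}))
    {x v : V} (hx : ∀ k, f k x ≤ b k) (hv : 0 < g v) :
    ∃ t : ℝ, 0 ≤ t ∧ (∀ k, f k (x + t • v) ≤ b k) ∧ ∃ k, 0 < f k v ∧ f k (x + t • v) = b k := by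
  obtain ⟨k₀, hk₀ : 0 < f k₀ v, hmin⟩ : ∃ k₀ ∈ {k | 0 < f k v}, ∀ k ∈ {k | 0 < f k v},
      (b k₀ - f k₀ x) / f k₀ v ≤ (b k - f k x) / f k v := by
    refine Set.exists_min_image _ _ (Set.toFinite _) ?_
    by_contra! hK
    obtain ⟨m, hm⟩ := hbdd
    have hxm : g x ≤ m := hm ⟨x, hx, rfl⟩
    set t := (m - g x + 1) / g v
    have hmem : ∀ k, f k (x + t • v) ≤ b k := fun k => by
      have : f k v ≤ 0 := not_lt.1 fun h => hK.subset h
      have : 0 ≤ t := div_nonneg (by linarith) hv.le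
      simp only [map_add, map_smul, smul_eq_mul]
      nlinarith [hx k]
    have := hm ⟨_, hmem, rfl⟩
    simp only [map_add, map_smul, smul_eq_mul, t, div_mul_cancel₀ _ hv.ne'] at this
    linarith
  refine ⟨_, div_nonneg (sub_nonneg.2 (hx k₀)) hk₀.le, fun k => ?_, k₀, hk₀, ?_⟩
  · simp only [map_add, map_smul, smul_eq_mul]
    rcases lt_or_ge 0 (f k v) with hk | hk
    · have := (le_div_iff₀ hk).1 (hmin k hk)
      linarith
    · nlinarith [hx k, div_nonneg (sub_nonneg.2 (hx k₀)) hk₀.le]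
  · simp only [map_add, map_smul, smul_eq_mul, div_mul_cancel₀ _ hk₀.ne']
    ring

lemma exists_le_apply_mem_span_of_bddAbove [Finite ι]
    (hbdd : BddAbove (g '' {x | ∀ k, f k x ≤ b k})) {x : V} (hx : ∀ k, f k x ≤ b k) :
    ∃ y, (∀ k, f k y ≤ b k) ∧ g x ≤ g y ∧ g ∈ Submodule.span ℝ (f '' {k | f k y = b k}) := by
  induction hn : {k | f k x < b k}.ncard using Nat.strong_induction_on generalizing x with
  | _ n ih =>
  by_cases hspan : g ∈ Submodule.span ℝ (f '' {k | f k x = b k})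
  · exact ⟨x, hx, le_rfl, hspan⟩
  obtain ⟨v, hv, hgv⟩ : ∃ v, (∀ k, f k x = b k → f k v = 0) ∧ 0 < g v := by
    have : ¬ ⨅ k : {k | f k x = b k}, LinearMap.ker (f k) ≤ LinearMap.ker g := fun h =>
      hspan (Set.image_eq_range f _ ▸ mem_span_of_iInf_ker_le_ker h)
    obtain ⟨w, hw, hgw⟩ := SetLike.not_le_iff_exists.1 this
    simp only [Submodule.mem_iInf, LinearMap.mem_ker, Subtype.forall] at hw hgw
    rcases lt_or_gt_of_ne hgw with h | h
    · exact ⟨-w, fun k hk => by simp [hw k hk], by simpa using h⟩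
    · exact ⟨w, hw, h⟩
  -- walk from `x` in direction `v` until a new constraint becomes active
  obtain ⟨t, ht, hxt, k₀, hk₀, hk₀t⟩ := exists_add_smul_eq_of_bddAbove hbdd hx hgv
  have hsub : {k | f k (x + t • v) < b k} ⊂ {k | f k x < b k} := by
    refine Set.ssubset_iff_of_subset (fun k hk => ?_) |>.2 ⟨k₀, ?_, hk₀t.not_lt⟩
    · refine (hx k).lt_of_ne fun hk' => ?_
      simp only [Set.mem_ofPred_eq, map_add, map_smul, hv k hk', smul_zero, add_zero] at hk
      exact hk.ne hk'
    · refine (hx k₀).lt_of_ne fun hk' => ?_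
      simp [hv k₀ hk'] at hk₀
  obtain ⟨y, hy, hle, hgy⟩ := ih _ (hn ▸ Set.ncard_lt_ncard hsub) hxt rfl
  refine ⟨y, hy, le_trans ?_ hle, hgy⟩
  simp only [map_add, map_smul, smul_eq_mul]
  nlinarith

theorem exists_isMaxOn_polyhedron_of_bddAbove [Finite ι]
    (hne : {x | ∀ k, f k x ≤ b k}.Nonempty) (hbdd : BddAbove (g '' {x | ∀ k, f k x ≤ b k})) :
    ∃ x ∈ {x | ∀ k, f k x ≤ b k}, IsMaxOn g {x | ∀ k, f k x ≤ b k} x := by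
  set T := {y | (∀ k, f k y ≤ b k) ∧ g ∈ Submodule.span ℝ (f '' {k | f k y = b k})}
  -- `g` is constant on the points of `T` sharing the same active constraints
  have hT : (g '' T).Finite := by
    refine (Set.finite_iUnion fun I : Set ι =>
      (?_ : (g '' {y ∈ T | {k | f k y = b k} = I}).Subsingleton).finite).subset ?_
    · rintro _ ⟨y, ⟨⟨-, hgy⟩, rfl⟩, rfl⟩ _ ⟨z, ⟨-, hz⟩, rfl⟩
      exact apply_eq_of_mem_span_of_eq hgy (fun k hk => hk) fun k hk => (hz ▸ hk :)
    · rintro _ ⟨y, hy, rfl⟩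
      exact Set.mem_iUnion.2 ⟨_, y, ⟨hy, rfl⟩, rfl⟩
  obtain ⟨x₀, hx₀⟩ := hne
  obtain ⟨y₀, hy₀, -, hgy₀⟩ := exists_le_apply_mem_span_of_bddAbove hbdd hx₀
  obtain ⟨x, ⟨hx, -⟩, hxmax⟩ := Set.Finite.exists_maximalFor' g T hT ⟨y₀, hy₀, hgy₀⟩
  refine ⟨x, hx, fun z hz => ?_⟩
  obtain ⟨y, hy, hzy, hgy⟩ := exists_le_apply_mem_span_of_bddAbove hbdd hz
  exact hzy.trans ((le_total (g y) (g x)).elim id (hxmax ⟨hy, hgy⟩))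

end Polyhedron

lemma Finset.mem_of_forall_separating {α : Type*} [Fintype α] [DecidableEq α]
    {𝒯 : Set (Finset α)} (hempty : ∅ ∈ 𝒯) (huniv : Finset.univ ∈ 𝒯)
    (hunion : ∀ S ∈ 𝒯, ∀ T ∈ 𝒯, S ∪ T ∈ 𝒯) (hinter : ∀ S ∈ 𝒯, ∀ T ∈ 𝒯, S ∩ T ∈ 𝒯)
    {A : Finset α} (hsep : ∀ i ∈ A, ∀ j ∉ A, ∃ S ∈ 𝒯, i ∈ S ∧ j ∉ S) : A ∈ 𝒯 := by
  choose! S hS using hsep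
  have hA : A.sup (fun i => Aᶜ.inf (S i)) = A := by
    ext a
    simp only [Finset.mem_sup, Finset.mem_inf, Finset.mem_compl]
    exact ⟨fun ⟨i, hi, ha⟩ => by_contra fun h => (hS i hi a h).2.2 (ha a h),
      fun ha => ⟨a, ha, fun j hj => (hS a ha j hj).2.1⟩⟩
  rw [← hA]
  refine Finset.sup_induction hempty hunion fun i hi => ?_
  exact Finset.inf_induction huniv hinter fun j hj => (hS i hi j (Finset.mem_compl.1 hj)).1

lemma Finset.sum_add_single_sub_single {α M : Type*} [DecidableEq α] [AddCommGroup M]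
    (S : Finset α) (y : α → M) (i j : α) (ε : M) :
    ∑ k ∈ S, (y + Pi.single i ε - Pi.single j ε : α → M) k =
      ∑ k ∈ S, y k + (if i ∈ S then ε else 0) - (if j ∈ S then ε else 0) := by
  simp [Finset.sum_add_distrib, Finset.sum_sub_distrib, Finset.sum_pi_single']

section rkSet

variable {d : ℕ} {P : Set (Fin d → ℝ)} {S : Finset (Fin d)}

lemma le_rkSet {y : Fin d → ℝ} (hy : y ∈ P) : ((∑ i ∈ S, y i : ℝ) : EReal) ≤ rkSet P S :=
  le_iSup₂ (f := fun y (_ : y ∈ P) => ((∑ i ∈ S, y i : ℝ) : EReal)) y hy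

lemma rkSet_mono {Q : Set (Fin d → ℝ)} (h : P ⊆ Q) : rkSet P S ≤ rkSet Q S :=
  biSup_mono fun _ hy => h hy

lemma bddAbove_sum_of_rkSet_lt_top (h : rkSet P S < ⊤) :
    BddAbove ((fun y => ∑ i ∈ S, y i) '' P) := by
  obtain ⟨m, hm, -⟩ := EReal.lt_iff_exists_real_btwn.1 h
  exact ⟨m, by rintro _ ⟨y, hy, rfl⟩; exact EReal.coe_le_coe_iff.1 ((le_rkSet hy).trans hm.le)⟩

end rkSet

def coordSum {d : ℕ} (S : Finset (Fin d)) : (Fin d → ℝ) →ₗ[ℝ] ℝ where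
  toFun y := ∑ i ∈ S, y i
  map_add' _ _ := Finset.sum_add_distrib
  map_smul' _ _ := (Finset.mul_sum ..).symm

@[simp]
lemma coordSum_apply {d : ℕ} (S : Finset (Fin d)) (y : Fin d → ℝ) :
    coordSum S y = ∑ i ∈ S, y i :=
  rfl

namespace Megamatroid

variable {d : ℕ} (M : Megamatroid d)

def IsTight (y : Fin d → ℝ) (S : Finset (Fin d)) : Prop :=
  ∃ n : ℤ, M.rk S = n ∧ ∑ i ∈ S, y i = n

-- `Q(rk) ∩ {y | c ≤ ∑_{i∈B} y_i}` as a finite system `f k y ≤ b k`: one inequality per set of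
-- finite rank, plus `∑ y_i ≥ rk(univ)` and `∑_{i∈B} y_i ≥ c`.
def constraintForm (B : Finset (Fin d)) : {S // M.rk S ≠ ⊤} ⊕ Bool → (Fin d → ℝ) →ₗ[ℝ] ℝ
  | .inl S => coordSum S
  | .inr true => -coordSum Finset.univ
  | .inr false => -coordSum B

def constraintBound (c : ℝ) : {S // M.rk S ≠ ⊤} ⊕ Bool → ℝ
  | .inl S => ((M.rk S).untopD 0 : ℤ)
  | .inr true => -((M.rk Finset.univ).untopD 0 : ℤ)
  | .inr false => -c

lemma setOf_constraint_eq (B : Finset (Fin d)) (c : ℝ) :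
    {y | ∀ k, M.constraintForm B k y ≤ M.constraintBound c k} =
      megaQ M ∩ {y | c ≤ ∑ i ∈ B, y i} := by
  obtain ⟨t, ht⟩ := WithTop.ne_top_iff_exists.1 M.rk_univ_ne_top
  ext y
  simp only [Set.mem_ofPred_eq, Sum.forall, Bool.forall_bool, Subtype.forall, constraintForm,
    constraintBound, megaQ, Set.mem_inter_iff, ← ht]
  constructor
  · rintro ⟨hS, hB, hU⟩
    have hle : ∀ (A : Finset (Fin d)) (z : ℤ), M.rk A = z → ∑ i ∈ A, y i ≤ z := fun A z hz => by
      simpa [hz] using hS A (hz ▸ WithTop.coe_ne_top)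
    refine ⟨⟨fun z hz => ?_, hle⟩, by simpa using hB⟩
    obtain rfl := WithTop.coe_inj.1 hz
    exact le_antisymm (hle _ t ht.symm) (by simpa using hU)
  · rintro ⟨⟨hU, hS⟩, hB⟩
    refine ⟨fun A hA => ?_, by simpa using hB, by simp [hU t rfl]⟩
    obtain ⟨z, hz⟩ := WithTop.ne_top_iff_exists.1 hA
    simpa [← hz] using hS A z hz.symm

variable {M}

lemma exists_isMaxOn_sum_inter {A : Finset (Fin d)} (hA : rkSet (megaQ M) A < ⊤)
    {B : Finset (Fin d)} {c : ℝ} {y : Fin d → ℝ} (hy : y ∈ megaQ M ∩ {z | c ≤ ∑ i ∈ B, z i}) :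
    ∃ z ∈ megaQ M ∩ {z | c ≤ ∑ i ∈ B, z i},
      IsMaxOn (fun z => ∑ i ∈ A, z i) (megaQ M ∩ {z | c ≤ ∑ i ∈ B, z i}) z := by
  rw [← M.setOf_constraint_eq] at hy ⊢
  refine exists_isMaxOn_polyhedron_of_bddAbove (g := coordSum A) ⟨y, hy⟩ ?_
  rw [M.setOf_constraint_eq]
  exact (bddAbove_sum_of_rkSet_lt_top hA).mono (Set.image_mono Set.inter_subset_left)
lemma isTight_empty (y : Fin d → ℝ) : M.IsTight y ∅ :=
  ⟨0, M.rk_empty, by simp⟩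

lemma isTight_univ {y : Fin d → ℝ} (hy : y ∈ megaQ M) : M.IsTight y Finset.univ := by
  obtain ⟨t, ht⟩ := WithTop.ne_top_iff_exists.1 M.rk_univ_ne_top
  exact ⟨t, ht.symm, hy.1 t ht.symm⟩

lemma IsTight.union_inter {y : Fin d → ℝ} (hy : y ∈ megaQ M) {S T : Finset (Fin d)}
    (hS : M.IsTight y S) (hT : M.IsTight y T) : M.IsTight y (S ∪ T) ∧ M.IsTight y (S ∩ T) := by
  obtain ⟨a, ha, hSa⟩ := hS
  obtain ⟨c, hc, hTc⟩ := hT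
  obtain ⟨hu, hi, hsub⟩ := M.submodular S T (ha ▸ WithTop.coe_ne_top) (hc ▸ WithTop.coe_ne_top)
  obtain ⟨u, hu⟩ := WithTop.ne_top_iff_exists.1 hu
  obtain ⟨v, hv⟩ := WithTop.ne_top_iff_exists.1 hi
  rw [← hu, ← hv, ha, hc] at hsub
  have hsub' : (u + v : ℝ) ≤ a + c := by exact_mod_cast hsub
  have hU := hy.2 _ u hu.symm
  have hI := hy.2 _ v hv.symm
  have := Finset.sum_union_inter (s₁ := S) (s₂ := T) (f := y)
  exact ⟨⟨u, hu.symm, by linarith⟩, ⟨v, hv.symm, by linarith⟩⟩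

lemma exists_pos_add_single_sub_single_mem_megaQ {y : Fin d → ℝ} (hy : y ∈ megaQ M)
    {i j : Fin d} (hij : ∀ S, M.IsTight y S → i ∈ S → j ∈ S) :
    ∃ ε > 0, y + Pi.single i ε - Pi.single j ε ∈ megaQ M := by
  have hev : ∀ S, ∀ᶠ ε in 𝓝[>] (0 : ℝ), ∀ n : ℤ, M.rk S = n →
      ∑ k ∈ S, (y + Pi.single i ε - Pi.single j ε : Fin d → ℝ) k ≤ n := by
    intro S
    by_cases hsep : i ∈ S ∧ j ∉ S
    · cases h : M.rk S with
      | top => exact .of_forall fun _ _ hn => (WithTop.top_ne_coe hn).elim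
      | coe m =>
        -- `S` separates `i` from `j`, so it is not tight and its constraint has slack
        have hlt : ∑ k ∈ S, y k < m :=
          (hy.2 S m h).lt_of_ne fun he => hsep.2 (hij S ⟨m, h, he⟩ hsep.1)
        filter_upwards [Ioo_mem_nhdsGT (sub_pos.2 hlt)] with ε hε n hn
        obtain rfl : m = n := WithTop.coe_inj.1 hn
        rw [Finset.sum_add_single_sub_single, if_pos hsep.1, if_neg hsep.2]
        linarith [hε.2]
    · filter_upwards [self_mem_nhdsWithin] with ε (hε : 0 < ε) n hn
      have := hy.2 S n hn
      rw [Finset.sum_add_single_sub_single]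
      split_ifs with hiS hjS
      · linarith
      · exact absurd ⟨hiS, hjS⟩ hsep
      all_goals linarith
  obtain ⟨ε, hε, hεpos⟩ := ((Filter.eventually_all.2 hev).and self_mem_nhdsWithin).exists
  refine ⟨ε, hεpos, fun n hn => ?_, fun S n hn => hε S n hn⟩
  rw [Finset.sum_add_single_sub_single, hy.1 n hn]
  simp

lemma isTight_of_isMaxOn {A B : Finset (Fin d)} (hAB : A ⊆ B) {c : ℝ} {y : Fin d → ℝ}
    (hy : y ∈ megaQ M ∩ {z | c ≤ ∑ i ∈ B, z i})
    (hmax : IsMaxOn (fun z => ∑ i ∈ A, z i) (megaQ M ∩ {z | c ≤ ∑ i ∈ B, z i}) y) :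
    M.IsTight y A := by
  refine Finset.mem_of_forall_separating (𝒯 := {S | M.IsTight y S}) (isTight_empty y)
    (isTight_univ hy.1) (fun S hS T hT => (hS.union_inter hy.1 hT).1)
    (fun S hS T hT => (hS.union_inter hy.1 hT).2) fun i hi j hj => ?_
  by_contra! hij
  obtain ⟨ε, hε, hmem⟩ := exists_pos_add_single_sub_single_mem_megaQ hy.1 hij
  have hB : c ≤ ∑ k ∈ B, (y + Pi.single i ε - Pi.single j ε : Fin d → ℝ) k := by
    have : c ≤ ∑ k ∈ B, y k := hy.2
    rw [Finset.sum_add_single_sub_single, if_pos (hAB hi)]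
    split_ifs <;> linarith
  have := hmax ⟨hmem, hB⟩
  simp only [Set.mem_ofPred_eq, Finset.sum_add_single_sub_single, if_pos hi, if_neg hj] at this
  linarith

lemma IsTight.rkSet_megaQ_eq {y : Fin d → ℝ} {S : Finset (Fin d)} (hS : M.IsTight y S)
    (hy : y ∈ megaQ M) : rkSet (megaQ M) S = ((∑ i ∈ S, y i : ℝ) : EReal) := by
  obtain ⟨n, hn, hyS⟩ := hS
  refine le_antisymm (iSup₂_le fun z hz => ?_) (le_rkSet hy)
  exact EReal.coe_le_coe_iff.2 (hyS ▸ hz.2 S n hn)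

end Megamatroid

/-- If `A ⊆ B`, `rk_Π(A) < ∞` and `F` is the subset of `Π = Q(rk)` where `∑_{i∈A} y_i`
attains the value `rk_Π(A)`, then `rk_F(B) = rk_Π(B)`. -/
theorem rkSet_face_eq (d : ℕ) (M : Megamatroid d) (A B : Finset (Fin d)) (hAB : A ⊆ B)
    (hfin : rkSet (megaQ M) A < ⊤) :
    rkSet {y ∈ megaQ M | ((∑ i ∈ A, y i : ℝ) : EReal) = rkSet (megaQ M) A} B
      = rkSet (megaQ M) B := by
  refine le_antisymm (rkSet_mono fun y hy => hy.1) (iSup₂_le fun y hy => ?_)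
  obtain ⟨z, hz, hzmax⟩ := M.exists_isMaxOn_sum_inter hfin (B := B) ⟨hy, le_refl (∑ i ∈ B, y i)⟩
  have hzF : ((∑ i ∈ A, z i : ℝ) : EReal) = rkSet (megaQ M) A :=
    ((Megamatroid.isTight_of_isMaxOn hAB hz hzmax).rkSet_megaQ_eq hz.1).symm
  exact (EReal.coe_le_coe_iff.2 hz.2).trans (le_rkSet ⟨hz.1, hzF⟩)
end

section
/- Let d ≥ 1 and let rk be a megamatroid on {1,…,d}. Then, as functions ℝ^d → ℤ, [Q(rk)] = Σ_{X̲} (−1)^{d−k} [R_MM(X̲, rk)], where the sum is over all chains X̲ : ∅ ⊂ X_1 ⊂ ⋯ ⊂ X_k = {1,…,d} (of every length k with 1 ≤ k ≤ d), and R_MM(X̲, rk) = {y ∈ ℝ^d : y_1+⋯+y_d = rk({1,…,d}) and Σ_{i∈X_j} y_i ≤ rk(X_j) for every j = 1,…,k with rk(X_j) finite}. -/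
open scoped BigOperators

attribute [local instance] Classical.propDecidable

/-- The cone `R_MM(X̲, rk)` for a chain `X̲` of length `k+1`. -/
def megaRMM {d : ℕ} (M : Megamatroid d) {k : ℕ} (X : Fin (k + 1) → Finset (Fin d)) :
    Set (Fin d → ℝ) :=
  {y | (∀ z : ℤ, M.rk Finset.univ = (z : WithTop ℤ) → ∑ i, y i = (z : ℝ)) ∧
    ∀ j : Fin (k + 1), ∀ z : ℤ, M.rk (X j) = (z : WithTop ℤ) → ∑ i ∈ X j, y i ≤ (z : ℝ)}

/-!
Fix `y` on the hyperplane `∑ i, y i = rk univ` and call a set `A` good when `y` satisfies the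
inequality of `A`. Both sides only see which sets are good: the left side is `1` iff all sets are
good, the right side is an alternating count of chains of good sets. Submodularity gives: if `A`
and `B` are bad and `A ∩ B` is good, then `A ∪ B` is bad. Hence a nonempty good set `Y` has an
element `i` such that adding `i` to a hereditarily good subset of `Y` keeps it hereditarily good,
so toggling `i` shows that the hereditarily good subsets of `Y` have alternating sum zero.
Splitting off the top of a chain, this evaluates the alternating count of good chains ending at
`Y` to `-(-1) ^ #Y` when every subset of `Y` is good, and to `0` otherwise.
-/

open Finset

section GoodSets

variable {α : Type*} [DecidableEq α] {P : Finset α → Prop}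

theorem not_union_of_minimal
    (hunion : ∀ A B : Finset α, ¬P A → ¬P B → P (A ∩ B) → ¬P (A ∪ B))
    {A B : Finset α} (hA : ¬P A) (hB : Minimal (¬P ·) B) : ¬P (A ∪ B) := by
  by_cases hBA : B ⊆ A
  · rwa [union_eq_left.2 hBA]
  · refine hunion A B hA hB.prop (not_not.1 (hB.not_prop_of_lt ?_))
    exact inter_subset_right.ssubset_of_not_subset fun h => hBA (h.trans inter_subset_left)

/-- Otherwise every `i ∈ Y` lies in a minimal bad subset of `Y`, and the union of these, which is
`Y`, would be bad. -/
theorem exists_mem_forall_hereditary_insert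
    (hunion : ∀ A B : Finset α, ¬P A → ¬P B → P (A ∩ B) → ¬P (A ∪ B))
    {Y : Finset α} (hY : P Y) (hne : Y.Nonempty) :
    ∃ i ∈ Y, ∀ C ⊆ Y, i ∉ C → (∀ W ⊆ C, P W) → P (insert i C) := by
  by_contra! h
  have minimal_bad : ∀ i ∈ Y, ∃ E ⊆ Y, i ∈ E ∧ Minimal (¬P ·) E := by
    intro i hi
    obtain ⟨C, hCY, hiC, hC, hbad⟩ := h i hi
    obtain ⟨E, hEC, hE⟩ := exists_minimal_le_of_wellFoundedLT (¬P ·) _ hbad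
    refine ⟨E, hEC.trans (insert_subset hi hCY), ?_, hE⟩
    by_contra hiE
    exact hE.prop (hC E ((subset_insert_iff_of_notMem hiE).1 hEC))
  have bad_cover : ∀ s ⊆ Y, s.Nonempty → ∃ B ⊆ Y, s ⊆ B ∧ ¬P B := by
    intro s hsY hs
    induction hs using Finset.Nonempty.cons_induction with
    | singleton a =>
      obtain ⟨E, hEY, haE, hE⟩ := minimal_bad a (hsY (mem_singleton_self a))
      exact ⟨E, hEY, singleton_subset_iff.2 haE, hE.prop⟩
    | cons a s ha hs ih =>
      obtain ⟨B, hBY, hsB, hB⟩ := ih ((subset_cons ha).trans hsY)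
      obtain ⟨E, hEY, haE, hE⟩ := minimal_bad a (hsY (mem_cons_self a s))
      exact ⟨B ∪ E, union_subset hBY hEY,
        cons_subset.2 ⟨mem_union_right _ haE, hsB.trans subset_union_left⟩,
        not_union_of_minimal hunion hB hE⟩
  obtain ⟨B, hBY, hYB, hB⟩ := bad_cover Y subset_rfl hne
  exact hB (subset_antisymm hBY hYB ▸ hY)

theorem sum_powerset_hereditary_neg_one_pow
    (hunion : ∀ A B : Finset α, ¬P A → ¬P B → P (A ∩ B) → ¬P (A ∪ B))
    {Y : Finset α} (hY : P Y) (hne : Y.Nonempty) :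
    ∑ Z ∈ Y.powerset, (if ∀ W ⊆ Z, P W then (-1 : ℤ) ^ #Z else 0) = 0 := by
  obtain ⟨i, hi, hinsert⟩ := exists_mem_forall_hereditary_insert hunion hY hne
  have hereditary_insert : ∀ C ⊆ Y.erase i,
      (∀ W ⊆ insert i C, P W) ↔ ∀ W ⊆ C, P W := by
    refine fun C hC => ⟨fun h W hW => h W (hW.trans (subset_insert i C)), fun h W hW => ?_⟩
    by_cases hiW : i ∈ W
    · rw [← insert_erase hiW]
      have hWC : W.erase i ⊆ C := subset_insert_iff.1 hW
      exact hinsert _ (hWC.trans (hC.trans (erase_subset i Y))) (notMem_erase i W)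
        fun V hV => h V (hV.trans hWC)
    · exact h W ((subset_insert_iff_of_notMem hiW).1 hW)
  rw [← insert_erase hi, sum_powerset_insert (notMem_erase i Y), ← sum_add_distrib]
  refine sum_eq_zero fun C hC => ?_
  rw [mem_powerset] at hC
  simp only [hereditary_insert C hC, card_insert_of_notMem fun h => notMem_erase i Y (hC h),
    pow_succ]
  split_ifs <;> ring

end GoodSets

theorem Fin.strictMono_snoc_iff {β : Type*} [Preorder β] {n : ℕ} {f : Fin n → β} {x : β} :
    StrictMono (Fin.snoc f x : Fin (n + 1) → β) ↔ StrictMono f ∧ ∀ i, f i < x := by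
  rw [← Fin.insertNth_last', Fin.strictMono_insertNth_iff]
  simp only [Fin.castSucc_lt_last, forall_const, Fin.le_castSucc_iff]
  exact ⟨fun h => ⟨h.1, h.2.1⟩,
    fun h => ⟨h.1, h.2, fun i hi => absurd hi (Fin.le_last i.succ).not_gt⟩⟩

section Chains

variable {α : Type*} [Fintype α] [DecidableEq α]

noncomputable def subsetChains (m : ℕ) (Y : Finset α) : Finset (Fin (m + 1) → Finset α) :=
  {X | StrictMono X ∧ X 0 ≠ ∅ ∧ X (Fin.last m) = Y}

noncomputable def goodChains (P : Finset α → Prop) (m : ℕ) (Y : Finset α) :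
    Finset (Fin (m + 1) → Finset α) :=
  {X ∈ subsetChains m Y | ∀ j, P (X j)}

variable {P : Finset α → Prop} {m : ℕ} {Y : Finset α}

theorem mem_goodChains {X : Fin (m + 1) → Finset α} :
    X ∈ goodChains P m Y ↔ StrictMono X ∧ X 0 ≠ ∅ ∧ X (Fin.last m) = Y ∧ ∀ j, P (X j) := by
  simp [goodChains, subsetChains, and_assoc]

theorem goodChains_eq_empty (hY : ¬P Y) : goodChains P m Y = ∅ :=
  eq_empty_of_forall_notMem fun X hX => by
    obtain ⟨-, -, hlast, hP⟩ := mem_goodChains.1 hX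
    exact hY (hlast ▸ hP (Fin.last m))

theorem card_goodChains_zero :
    #(goodChains P 0 Y) = if P Y ∧ Y ≠ ∅ then 1 else 0 := by
  have : goodChains P 0 Y = ({fun _ => Y} : Finset (Fin 1 → Finset α)).filter
      fun _ => P Y ∧ Y ≠ ∅ := by
    ext X
    have hX : X = (fun _ => Y) ↔ X 0 = Y := by
      rw [funext_iff, Fin.forall_fin_one]
    simp only [mem_goodChains, mem_filter, mem_singleton, hX]
    constructor
    · rintro ⟨-, hne, hlast, hP⟩
      exact ⟨hlast, hlast ▸ hP 0, hlast ▸ hne⟩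
    · rintro ⟨h0, hP, hne⟩
      exact ⟨Subsingleton.strictMono (α := Fin 1) X, h0 ▸ hne, h0, Fin.forall_fin_one.2 (h0 ▸ hP)⟩
  rw [this, filter_singleton]
  split_ifs <;> simp

theorem snoc_mem_goodChains_iff {X : Fin (m + 1) → Finset α} :
    Fin.snoc X Y ∈ goodChains P (m + 1) Y ↔
      X ∈ goodChains P m (X (Fin.last m)) ∧ X (Fin.last m) ⊂ Y ∧ P Y := by
  have h0 : (Fin.snoc X Y : Fin (m + 2) → Finset α) 0 = X 0 := Fin.snoc_castSucc (i := 0) ..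
  have hgood : (∀ j, P ((Fin.snoc X Y : Fin (m + 2) → Finset α) j)) ↔ (∀ j, P (X j)) ∧ P Y := by
    rw [Fin.forall_fin_succ']
    simp only [Fin.snoc_castSucc, Fin.snoc_last]
  have hlt : StrictMono X → ((∀ i, X i < Y) ↔ X (Fin.last m) < Y) := fun hmono =>
    ⟨fun h => h _, fun h i => (hmono.monotone (Fin.le_last i)).trans_lt h⟩
  simp only [mem_goodChains, Fin.strictMono_snoc_iff, Fin.snoc_last, h0, hgood]
  constructor
  · rintro ⟨⟨hmono, hX⟩, hne, -, hP, hPY⟩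
    exact ⟨⟨hmono, hne, trivial, hP⟩, (hlt hmono).1 hX, hPY⟩
  · rintro ⟨⟨hmono, hne, -, hP⟩, hXY, hPY⟩
    exact ⟨⟨hmono, (hlt hmono).2 hXY⟩, hne, trivial, hP, hPY⟩

theorem init_mem_goodChains {X : Fin (m + 2) → Finset α} (hX : X ∈ goodChains P (m + 1) Y) :
    Fin.init X ∈ goodChains P m (X (Fin.last m).castSucc) ∧ X (Fin.last m).castSucc ⊂ Y := by
  have hXY : Fin.snoc (Fin.init X) Y = X := by
    rw [← (mem_goodChains.1 hX).2.2.1]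
    exact Fin.snoc_init_self X
  rw [← hXY, snoc_mem_goodChains_iff] at hX
  exact ⟨hX.1, hX.2.1⟩

theorem card_goodChains_succ :
    #(goodChains P (m + 1) Y) = if P Y then ∑ Z ∈ Y.ssubsets, #(goodChains P m Z) else 0 := by
  split_ifs with hY
  · rw [card_eq_sum_card_fiberwise (f := fun X => X (Fin.last m).castSucc) (t := Y.ssubsets)
      fun X hX => mem_ssubsets.2 (init_mem_goodChains hX).2]
    refine sum_congr rfl fun Z hZ => card_nbij' Fin.init (fun X => Fin.snoc X Y) ?_ ?_ ?_ ?_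
    · intro X hX
      simp only [mem_coe, mem_filter] at hX
      exact hX.2 ▸ (init_mem_goodChains hX.1).1
    · intro X hX
      have hlast : X (Fin.last m) = Z := (mem_goodChains.1 hX).2.2.1
      simp only [mem_coe, mem_filter, Fin.snoc_castSucc, snoc_mem_goodChains_iff, hlast]
      exact ⟨⟨hlast ▸ hX, mem_ssubsets.1 hZ, hY⟩, trivial⟩
    · intro X hX
      simp only [mem_coe, mem_filter] at hX
      rw [← (mem_goodChains.1 hX.1).2.2.1]
      exact Fin.snoc_init_self X
    · intro X _
      exact Fin.init_snoc _ _
  · rw [goodChains_eq_empty hY, card_empty]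

noncomputable def altChainCount (P : Finset α → Prop) (n : ℕ) (Y : Finset α) : ℤ :=
  ∑ m ∈ range n, (-1) ^ m * #(goodChains P m Y)

theorem altChainCount_succ {n : ℕ} :
    altChainCount P (n + 1) Y =
      if P Y then (if Y = ∅ then 0 else 1) - ∑ Z ∈ Y.ssubsets, altChainCount P n Z else 0 := by
  by_cases hY : P Y
  · have hstep : ∀ m, (-1 : ℤ) ^ (m + 1) * #(goodChains P (m + 1) Y) =
        -∑ Z ∈ Y.ssubsets, (-1 : ℤ) ^ m * #(goodChains P m Z) := by
      intro m
      rw [card_goodChains_succ, if_pos hY, Nat.cast_sum, mul_sum, pow_succ, ← sum_neg_distrib]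
      exact sum_congr rfl fun _ _ => by ring
    rw [altChainCount, sum_range_succ', card_goodChains_zero]
    simp only [hstep, sum_neg_distrib, altChainCount, sum_comm (s := range n), hY, true_and]
    rcases eq_or_ne Y ∅ with h | h <;> simp [h, sub_eq_neg_add]
  · simp [altChainCount, goodChains_eq_empty hY, hY]

theorem altChainCount_eq (hP0 : P ∅)
    (hunion : ∀ A B : Finset α, ¬P A → ¬P B → P (A ∩ B) → ¬P (A ∪ B))
    {n : ℕ} {Y : Finset α} (hn : #Y ≤ n) :
    altChainCount P n Y = (if Y = ∅ then 1 else 0) - if ∀ Z ⊆ Y, P Z then (-1) ^ #Y else 0 := by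
  induction n generalizing Y with
  | zero =>
    obtain rfl := card_eq_zero.1 (Nat.le_zero.1 hn)
    simp [altChainCount, hP0]
  | succ n ih =>
    have hsum : ∑ Z ∈ Y.ssubsets, altChainCount P n Z = (if Y = ∅ then 0 else 1) -
        ∑ Z ∈ Y.ssubsets, if ∀ W ⊆ Z, P W then (-1 : ℤ) ^ #Z else 0 := by
      rw [sum_congr rfl fun Z hZ => ih (by have := card_lt_card (mem_ssubsets.1 hZ); omega),
        sum_sub_distrib, sum_ite_eq']
      rcases Y.eq_empty_or_nonempty with rfl | hne
      · simp
      · simp [hne.ne_empty, empty_mem_ssubsets hne]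
    rw [altChainCount_succ, hsum]
    by_cases hY : P Y
    · rcases Y.eq_empty_or_nonempty with rfl | hne
      · simp [ssubsets, hP0]
      · have h := sum_powerset_hereditary_neg_one_pow hunion hY hne
        rw [← sum_erase_add _ _ (mem_powerset_self Y)] at h
        simp only [ssubsets, hne.ne_empty, hY, if_true, if_false]
        linarith
    · have hnot : ¬ ∀ Z ⊆ Y, P Z := fun h => hY (h Y subset_rfl)
      have hne : Y ≠ ∅ := by rintro rfl; exact hY hP0
      simp [hY, hnot, hne]

theorem sum_card_goodChains_univ [Nonempty α] (hP0 : P ∅)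
    (hunion : ∀ A B : Finset α, ¬P A → ¬P B → P (A ∩ B) → ¬P (A ∪ B)) :
    ∑ k ∈ range (Fintype.card α),
        (-1 : ℤ) ^ (Fintype.card α - (k + 1)) * #(goodChains P k univ) =
      if ∀ A, P A then 1 else 0 := by
  set n := Fintype.card α
  have hsq : ∀ k : ℕ, (-1 : ℤ) ^ k * (-1) ^ k = 1 := fun k => by
    rw [← pow_add, Even.neg_one_pow ⟨k, rfl⟩]
  have hsign : ∀ k ∈ range n, (-1 : ℤ) ^ (n - (k + 1)) = -(-1) ^ n * (-1) ^ k := by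
    intro k hk
    obtain ⟨j, hj⟩ : ∃ j, n = j + (k + 1) := ⟨n - (k + 1), by rw [mem_range] at hk; omega⟩
    rw [hj, Nat.add_sub_cancel, pow_add, pow_succ]
    linear_combination (-(-1 : ℤ) ^ j) * hsq k
  rw [sum_congr rfl fun k hk => by rw [hsign k hk, mul_assoc], ← mul_sum]
  change -(-1) ^ n * altChainCount P n univ = _
  rw [altChainCount_eq hP0 hunion card_univ.le]
  simp only [univ_nonempty.ne_empty, subset_univ, forall_const, card_univ, if_false, zero_sub]
  split_ifs
  · linear_combination hsq n
  · simp

end Chains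

namespace Megamatroid

variable {d : ℕ} (M : Megamatroid d) (y : Fin d → ℝ)

def RankIneq (A : Finset (Fin d)) : Prop :=
  ∀ z : ℤ, M.rk A = z → ∑ i ∈ A, y i ≤ z

theorem rankIneq_empty : M.RankIneq y ∅ := by
  intro z hz
  rw [M.rk_empty] at hz
  have : z = 0 := by exact_mod_cast hz.symm
  simp [this]

theorem not_rankIneq_union {A B : Finset (Fin d)} (hA : ¬M.RankIneq y A) (hB : ¬M.RankIneq y B)
    (hAB : M.RankIneq y (A ∩ B)) : ¬M.RankIneq y (A ∪ B) := by
  simp only [RankIneq, not_forall, not_le, exists_prop] at hA hB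
  obtain ⟨a, ha, hya⟩ := hA
  obtain ⟨b, hb, hyb⟩ := hB
  obtain ⟨hu, hv, hle⟩ := M.submodular A B (ha ▸ WithTop.coe_ne_top) (hb ▸ WithTop.coe_ne_top)
  obtain ⟨u, hu⟩ := WithTop.ne_top_iff_exists.1 hu
  obtain ⟨v, hv⟩ := WithTop.ne_top_iff_exists.1 hv
  rw [← hu, ← hv, ha, hb, ← WithTop.coe_add, ← WithTop.coe_add, WithTop.coe_le_coe] at hle
  have hcast : (u + v : ℝ) ≤ a + b := by exact_mod_cast hle
  have hmod := sum_union_inter (s₁ := A) (s₂ := B) (f := y)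
  have hyv := hAB v hv.symm
  intro hU
  linarith [hU u hu.symm]

end Megamatroid

/-- Theorem `theo1`: `[Q(rk)] = ∑_{X̲} (−1)^{d−ℓ(X̲)} [R_MM(X̲, rk)]`, summed over all
chains `∅ ⊂ X_1 ⊂ ⋯ ⊂ X_{k+1} = {1,…,d}` of every length `k+1` with `1 ≤ k+1 ≤ d`. -/
theorem indicator_Q_eq_sum_chains (d : ℕ) (hd : 1 ≤ d) (M : Megamatroid d) :
    Set.indicator (megaQ M) (fun _ => (1 : ℤ)) =
      ∑ k ∈ Finset.range d,
        ∑ X ∈ Finset.univ.filter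
            (fun X : Fin (k + 1) → Finset (Fin d) =>
              StrictMono X ∧ X 0 ≠ ∅ ∧ X (Fin.last k) = Finset.univ),
          ((-1 : ℤ) ^ (d - (k + 1))) • Set.indicator (megaRMM M X) (fun _ => (1 : ℤ)) := by
  funext y
  simp only [Finset.sum_apply, Pi.smul_apply, smul_eq_mul, Set.indicator_apply]
  by_cases hy : ∀ z : ℤ, M.rk Finset.univ = z → ∑ i, y i = z
  · have hQ : y ∈ megaQ M ↔ ∀ A, M.RankIneq y A := and_iff_right hy
    have hR : ∀ k (X : Fin (k + 1) → Finset (Fin d)),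
        y ∈ megaRMM M X ↔ ∀ j, M.RankIneq y (X j) := fun _ _ => and_iff_right hy
    have : Nonempty (Fin d) := Fin.pos_iff_nonempty.1 hd
    have key := sum_card_goodChains_univ (M.rankIneq_empty y)
      fun _ _ => M.not_rankIneq_union y
    rw [Fintype.card_fin] at key
    simp only [hQ, hR, ← key, goodChains, ← mul_sum, natCast_card_filter]
    rfl
  · have hQ : y ∉ megaQ M := fun h => hy h.1
    have hR : ∀ k (X : Fin (k + 1) → Finset (Fin d)), y ∉ megaRMM M X := fun _ _ h => hy h.1
    simp [hQ, hR]
end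

section
/- Let rk_1,…,rk_n be megamatroids on {1,…,d}, all of the same rank r (i.e. rk_m({1,…,d}) = r for all m), and let a_1,…,a_n be integers such that Σ_{m=1}^n a_m [Q(rk_m)] = 0 as a function ℝ^d → ℤ. Then for every chain X̲ of length k in {1,…,d} and every integer vector r̲ = (r_1,…,r_k) with r_k = r, one has Σ_{m=1}^n a_m s_{X̲,r̲}(rk_m) = 0. -/
open scoped BigOperators

/-- The indicator function `[Π] : ℝ^d → ℤ` of a subset `Π ⊆ ℝ^d`. -/
noncomputable def indFn {d : ℕ} (P : Set (Fin d → ℝ)) : (Fin d → ℝ) → ℤ :=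
  P.indicator fun _ => 1


/-!
For closed convex sets `K m ⊆ ℝ^d`, `∑ m, a m * [K m] = 0` implies `∑ m, a m * χ(K m) = 0`, where
the Euler characteristic `χ(K)` is `1` for nonempty `K` and `0` otherwise: slicing along one
coordinate reduces this to compact intervals, and the Euler characteristic of an interval is the
jump of its indicator at its right endpoint. Applied to
`K m = Q(rk_m) ∩ {y | ρ j ≤ y(X j) for all j}`, which is nonempty iff `ρ j ≤ rk_m (X j)` for
all `j`, this shows that `∑ m, a m * [ρ ≤ rk_m ∘ X]` vanishes for every integer vector `ρ`;
inclusion–exclusion over `ρ j ∈ {r j, r j + 1}` then isolates `[rk_m ∘ X = r]`.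
A point of `K m` is produced by Edmonds' greedy algorithm along the chain, run on a finite
submodular function that agrees with `rk_m` where it is finite and is large where it is `∞`.
-/

open Finset Filter Topology
open scoped symmDiff

theorem ite_coe_eq_eq_sub (x : WithTop ℤ) (z : ℤ) :
    (if x = z then 1 else 0 : ℤ) =
      (if (z : WithTop ℤ) ≤ x then 1 else 0) -
        (if ((z + 1 : ℤ) : WithTop ℤ) ≤ x then 1 else 0) := by
  induction x with
  | top => simp
  | coe x => simp only [WithTop.coe_eq_coe, WithTop.coe_le_coe]; split_ifs <;> omega

theorem sum_ite_forall_eq_eq_zero {ι κ : Type*} [Fintype ι] [Fintype κ] (a : κ → ℤ)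
    (f : κ → ι → WithTop ℤ)
    (h : ∀ ρ : ι → ℤ, ∑ m, a m * (if ∀ j, (ρ j : WithTop ℤ) ≤ f m j then 1 else 0) = 0)
    (r : ι → ℤ) :
    ∑ m, a m * (if ∀ j, f m j = r j then 1 else 0) = 0 := by
  classical
  set ρ : Finset ι → ι → ℤ := fun t j => r j + if j ∈ t then 1 else 0
  have hexpand : ∀ m, (if ∀ j, f m j = r j then 1 else 0 : ℤ) =
      ∑ t ∈ univ.powerset, (-1) ^ #t * (if ∀ j, (ρ t j : WithTop ℤ) ≤ f m j then 1 else 0) := by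
    intro m
    simp only [← Fintype.prod_boole, ite_coe_eq_eq_sub, prod_sub]
    refine sum_congr rfl fun t _ => ?_
    have hpiece : ∀ j, (if (ρ t j : WithTop ℤ) ≤ f m j then 1 else 0 : ℤ) =
        t.piecewise (fun j => if ((r j + 1 : ℤ) : WithTop ℤ) ≤ f m j then (1 : ℤ) else 0)
          (fun j => if (r j : WithTop ℤ) ≤ f m j then 1 else 0) j := by
      intro j
      by_cases hj : j ∈ t <;>
        simp only [ρ, hj, piecewise_eq_of_mem, piecewise_eq_of_notMem, if_true, if_false, add_zero,
          not_false_eq_true]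
    rw [prod_congr rfl fun j _ => hpiece j, prod_piecewise, univ_inter]
    ring
  calc ∑ m, a m * (if ∀ j, f m j = r j then 1 else 0)
      = ∑ t ∈ univ.powerset, (-1) ^ #t *
          ∑ m, a m * (if ∀ j, (ρ t j : WithTop ℤ) ≤ f m j then 1 else 0) := by
        simp only [hexpand, mul_sum]
        rw [sum_comm]
        exact sum_congr rfl fun _ _ => sum_congr rfl fun _ _ => by ring
    _ = 0 := by simp only [h, mul_zero, sum_const_zero]

section EulerCharacteristic

variable {ι : Type*} [Fintype ι]

theorem eventually_mem_iff_of_isCompact_of_convex {I : Set ℝ} (hc : IsCompact I)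
    (hI : Convex ℝ I) (t : ℝ) : ∀ᶠ s in 𝓝[>] t, (s ∈ I ↔ t ∈ I ∧ t ≠ sSup I) := by
  by_cases ht : t ∈ I
  · rcases (le_csSup hc.bddAbove ht).eq_or_lt with heq | hlt
    · filter_upwards [self_mem_nhdsWithin] with s hs
      simp only [heq, ne_eq, not_true_eq_false, and_false, iff_false]
      exact fun hsI => (le_csSup hc.bddAbove hsI).not_gt (heq ▸ hs)
    · filter_upwards [Ioo_mem_nhdsGT hlt] with s hs
      simp only [ht, hlt.ne, ne_eq, not_false_eq_true, and_self, iff_true]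
      exact hI.ordConnected.out ht (hc.sSup_mem ⟨t, ht⟩) ⟨hs.1.le, hs.2.le⟩
  · filter_upwards [nhdsWithin_le_nhds (hc.isClosed.isOpen_compl.mem_nhds ht)] with s hs
    simp only [ht, false_and, iff_false]
    exact hs

open scoped Classical in
theorem euler_sum_eq_zero_real (b : ι → ℤ) (I : ι → Set ℝ)
    (hconv : ∀ i, Convex ℝ (I i)) (hcomp : ∀ i, IsCompact (I i))
    (h : ∀ t, ∑ i, b i * (I i).indicator 1 t = 0) :
    ∑ i, b i * (if (I i).Nonempty then 1 else 0) = 0 := by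
  have hjump : ∀ t, ∑ i, b i * (if t = sSup (I i) ∧ t ∈ I i then 1 else 0) = 0 := by
    intro t
    obtain ⟨s, hs⟩ := (eventually_all.2 fun i =>
      eventually_mem_iff_of_isCompact_of_convex (hcomp i) (hconv i) t).exists
    calc ∑ i, b i * (if t = sSup (I i) ∧ t ∈ I i then 1 else 0)
        = ∑ i, b i * (I i).indicator 1 t - ∑ i, b i * (I i).indicator 1 s := by
          rw [← sum_sub_distrib]
          refine sum_congr rfl fun i _ => ?_
          rw [← mul_sub, Set.indicator_apply, Set.indicator_apply, hs i]
          by_cases hti : t ∈ I i <;> by_cases htop : t = sSup (I i) <;> simp [hti, htop]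
      _ = 0 := by rw [h, h, sub_zero]
  have hsum : ∀ i, (if (I i).Nonempty then 1 else 0 : ℤ) =
      ∑ t ∈ univ.image (fun j => sSup (I j)), if t = sSup (I i) ∧ t ∈ I i then 1 else 0 := by
    intro i
    simp only [ite_and]
    rw [sum_ite_eq', if_pos (mem_image_of_mem _ (mem_univ i))]
    exact if_congr ⟨(hcomp i).sSup_mem, fun h => ⟨_, h⟩⟩ rfl rfl
  simp only [hsum, mul_sum]
  rw [sum_comm]
  exact sum_eq_zero fun t _ => hjump t

theorem mem_tail_image_inter_iff {d : ℕ} (K : Set (Fin (d + 1) → ℝ)) (τ : ℝ) (z : Fin d → ℝ) :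
    z ∈ Fin.tail '' (K ∩ {x | x 0 = τ}) ↔ Fin.cons τ z ∈ K := by
  constructor
  · rintro ⟨x, ⟨hx, rfl⟩, rfl⟩
    rwa [Fin.cons_self_tail]
  · exact fun h => ⟨Fin.cons τ z, ⟨h, Fin.cons_zero _ _⟩, Fin.tail_cons _ _⟩

open scoped Classical in
theorem euler_sum_eq_zero_of_isCompact {d : ℕ} (b : ι → ℤ) (K : ι → Set (Fin d → ℝ))
    (hconv : ∀ i, Convex ℝ (K i)) (hcomp : ∀ i, IsCompact (K i))
    (h : ∀ x, ∑ i, b i * (K i).indicator 1 x = 0) :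
    ∑ i, b i * (if (K i).Nonempty then 1 else 0) = 0 := by
  induction d with
  | zero =>
    have hne : ∀ i, (K i).Nonempty ↔ 0 ∈ K i :=
      fun i => ⟨fun ⟨x, hx⟩ => Subsingleton.elim x 0 ▸ hx, fun h => ⟨0, h⟩⟩
    simpa [hne, Set.indicator_apply] using h 0
  | succ d ih =>
    set slice : ι → ℝ → Set (Fin d → ℝ) := fun i τ => Fin.tail '' (K i ∩ {x | x 0 = τ})
    set proj : ι → Set ℝ := fun i => (fun x => x 0) '' K i
    have hslice : ∀ τ, ∑ i, b i * (if (slice i τ).Nonempty then 1 else 0) = 0 := by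
      intro τ
      refine ih (fun i => slice i τ) (fun i => ?_) (fun i => ?_) (fun z => ?_)
      · exact ((hconv i).inter ((convex_singleton τ).linear_preimage (LinearMap.proj 0))
          ).linear_image (LinearMap.funLeft ℝ ℝ Fin.succ)
      · exact ((hcomp i).inter_right (isClosed_eq (continuous_apply 0) continuous_const)).image
          (continuous_pi fun j => continuous_apply j.succ)
      · simpa only [Set.indicator_apply, slice, mem_tail_image_inter_iff, Pi.one_apply]
          using h (Fin.cons τ z)
    have hproj : ∀ τ i, τ ∈ proj i ↔ (slice i τ).Nonempty := by
      intro τ i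
      rw [Set.image_nonempty]
      exact Iff.rfl
    have := euler_sum_eq_zero_real b proj (fun i => (hconv i).linear_image (LinearMap.proj 0))
      (fun i => (hcomp i).image (continuous_apply 0)) (fun τ => by
        simpa [Set.indicator_apply, hproj] using hslice τ)
    simpa [proj] using this

open scoped Classical in
theorem euler_sum_eq_zero_of_isClosed {d : ℕ} (b : ι → ℤ) (K : ι → Set (Fin d → ℝ))
    (hconv : ∀ i, Convex ℝ (K i)) (hcl : ∀ i, IsClosed (K i))
    (h : ∀ x, ∑ i, b i * (K i).indicator 1 x = 0) :
    ∑ i, b i * (if (K i).Nonempty then 1 else 0) = 0 := by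
  have hball : ∀ i, ∃ R : ℝ, (K i).Nonempty → (K i ∩ Metric.closedBall 0 R).Nonempty := by
    intro i
    by_cases hi : (K i).Nonempty
    · obtain ⟨x, hx⟩ := hi
      exact ⟨‖x‖, fun _ => ⟨x, hx, mem_closedBall_zero_iff.2 le_rfl⟩⟩
    · exact ⟨0, fun h => absurd h hi⟩
  choose R hR using hball
  obtain ⟨R₀, hR₀⟩ := Finite.exists_le R
  have hne : ∀ i, (K i ∩ Metric.closedBall 0 R₀).Nonempty ↔ (K i).Nonempty := fun i =>
    ⟨fun h => h.mono Set.inter_subset_left, fun h => (hR i h).mono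
      (Set.inter_subset_inter_right _ (Metric.closedBall_subset_closedBall (hR₀ i)))⟩
  have := euler_sum_eq_zero_of_isCompact b (fun i => K i ∩ Metric.closedBall 0 R₀)
    (fun i => (hconv i).inter (convex_closedBall 0 R₀))
    (fun i => (isCompact_closedBall 0 R₀).inter_left (hcl i)) (fun x => by
      simp only [Set.inter_indicator_one, Pi.mul_apply, ← mul_assoc, ← sum_mul, h, zero_mul])
  simpa only [hne] using this

end EulerCharacteristic

section Greedy

variable {α : Type*} [DecidableEq α]

theorem IsChain.exists_mem_forall_mem_imp_subset {C : Set (Finset α)} (hC : IsChain (· ⊆ ·) C)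
    {B : Finset α} (hB : B.Nonempty) : ∃ i ∈ B, ∀ X ∈ C, i ∈ X → B ⊆ X := by
  by_contra! hcon
  choose X hXC hiX hBX using hcon
  obtain ⟨i₀, hi₀, hmax⟩ := B.exists_max_image (fun i => if h : i ∈ B then #(X i h) else 0) hB
  refine hBX i₀ hi₀ fun i hi => ?_
  have hcard := hmax i hi
  simp only [dif_pos hi, dif_pos hi₀] at hcard
  rcases hC.total (hXC i hi) (hXC i₀ hi₀) with hsub | hsub
  · exact hsub (hiX i hi)
  · exact (eq_of_subset_of_card_le hsub hcard) ▸ hiX i hi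

variable (g : Finset α → ℤ) (C : Set (Finset α))

/-- The invariant of the greedy algorithm after it has treated the elements of `B`. -/
def IsGreedyOn (B : Finset α) (y : α → ℤ) : Prop :=
  (∀ t ∉ B, y t = 0) ∧ (∀ A ⊆ B, ∑ t ∈ A, y t ≤ g A) ∧ ∀ X ∈ C, ∑ t ∈ X ∩ B, y t = g (X ∩ B)

variable {g C}

theorem IsGreedyOn.step (hg : ∀ A B, g (A ∪ B) + g (A ∩ B) ≤ g A + g B) {B : Finset α}
    {y : α → ℤ} (hy : IsGreedyOn g C B y) {i : α} (hi : i ∉ B)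
    (hiC : ∀ X ∈ C, i ∈ X → insert i B ⊆ X) :
    IsGreedyOn g C (insert i B) (y + Pi.single i (g (insert i B) - g B)) := by
  obtain ⟨hy0, hyle, hytight⟩ := hy
  have hsum : ∀ A, ∑ t ∈ A, (y + Pi.single i (g (insert i B) - g B) : α → ℤ) t =
      ∑ t ∈ A, y t + if i ∈ A then g (insert i B) - g B else 0 :=
    fun A => by simp only [Pi.add_apply, sum_add_distrib, sum_pi_single']
  have hyi : y i = 0 := hy0 i hi
  refine ⟨fun t ht => ?_, fun A hA => ?_, fun X hX => ?_⟩
  · rw [mem_insert, not_or] at ht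
    simp [hy0 t ht.2, ht.1]
  · by_cases hiA : i ∈ A
    · rw [hsum, if_pos hiA]
      have hunion : A ∪ B = insert i B := by
        exact le_antisymm (union_subset hA (subset_insert i B))
          (insert_subset (mem_union_left B hiA) subset_union_right)
      have hinter : A ∩ B = A.erase i := by
        ext t
        simp only [mem_inter, mem_erase]
        exact ⟨fun ⟨htA, htB⟩ => ⟨fun h => hi (h ▸ htB), htA⟩,
          fun ⟨hti, htA⟩ => ⟨htA, mem_of_mem_insert_of_ne (hA htA) hti⟩⟩
      have := hg A B
      rw [hunion, hinter] at this
      have := hyle (A.erase i) (by rw [← hinter]; exact inter_subset_right)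
      rw [sum_erase A hyi] at this
      linarith
    · rw [hsum, if_neg hiA, add_zero]
      exact hyle A fun t ht => mem_of_mem_insert_of_ne (hA ht) fun h => hiA (h ▸ ht)
  · by_cases hiX : i ∈ X
    · have hsubX := hiC X hX hiX
      rw [inter_eq_right.2 hsubX, hsum, if_pos (mem_insert_self i B), sum_insert hi, hyi,
        ← inter_eq_right.2 ((subset_insert i B).trans hsubX), hytight X hX]
      ring
    · rw [inter_insert_of_notMem hiX, hsum, if_neg fun h => hiX (mem_of_mem_inter_left h),
        hytight X hX, add_zero]

theorem exists_isGreedyOn (hg0 : g ∅ = 0) (hg : ∀ A B, g (A ∪ B) + g (A ∩ B) ≤ g A + g B)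
    (hC : IsChain (· ⊆ ·) C) (B : Finset α) : ∃ y, IsGreedyOn g C B y := by
  induction B using Finset.strongInduction with
  | _ B ih =>
  rcases B.eq_empty_or_nonempty with rfl | hB
  · exact ⟨0, fun _ _ => rfl, fun A hA => by simp [subset_empty.1 hA, hg0],
      fun X _ => by simp [hg0]⟩
  obtain ⟨i, hiB, hiC⟩ := hC.exists_mem_forall_mem_imp_subset hB
  obtain ⟨y, hy⟩ := ih _ (erase_ssubset hiB)
  rw [← insert_erase hiB] at hiC ⊢
  exact ⟨_, hy.step hg (notMem_erase i B) hiC⟩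

theorem exists_le_of_submodular_of_isChain [Fintype α] (hg0 : g ∅ = 0)
    (hg : ∀ A B, g (A ∪ B) + g (A ∩ B) ≤ g A + g B) (hC : IsChain (· ⊆ ·) C) :
    ∃ y : α → ℤ, (∀ A, ∑ t ∈ A, y t ≤ g A) ∧ ∀ X ∈ C, ∑ t ∈ X, y t = g X := by
  obtain ⟨y, -, hle, htight⟩ := exists_isGreedyOn hg0 hg hC univ
  exact ⟨y, fun A => hle A (subset_univ A), fun X hX => by simpa using htight X hX⟩

end Greedy

section HammingExtension

variable {α : Type*} [DecidableEq α]

theorem card_symmDiff_union_add_card_symmDiff_inter_le [Fintype α] (A₁ A₂ B₁ B₂ : Finset α) :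
    #((A₁ ∪ A₂) ∆ (B₁ ∪ B₂)) + #((A₁ ∩ A₂) ∆ (B₁ ∩ B₂)) ≤ #(A₁ ∆ B₁) + #(A₂ ∆ B₂) := by
  have hcard : ∀ S : Finset α, #S = ∑ x, if x ∈ S then 1 else 0 := fun S => by
    rw [sum_boole, Nat.cast_id, filter_mem_eq_inter, univ_inter]
  simp only [hcard, ← sum_add_distrib]
  refine sum_le_sum fun x _ => ?_
  by_cases h₁ : x ∈ A₁ <;> by_cases h₂ : x ∈ A₂ <;> by_cases h₃ : x ∈ B₁ <;>
    by_cases h₄ : x ∈ B₂ <;> simp [mem_symmDiff, h₁, h₂, h₃, h₄]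

theorem one_le_card_symmDiff {A B : Finset α} (h : A ≠ B) : 1 ≤ #(A ∆ B) :=
  card_pos.2 (nonempty_iff_ne_empty.2 fun h' => h (symmDiff_eq_bot.1 h'))

/-- The McShane extension of `v` from `F` with Lipschitz constant `N` for the Hamming
distance `#(A ∆ B)`. -/
def hammingExtension (F : Finset (Finset α)) (hF : F.Nonempty) (v : Finset α → ℤ) (N : ℤ)
    (A : Finset α) : ℤ :=
  F.inf' hF fun B => v B + N * #(A ∆ B)

variable {F : Finset (Finset α)} (hF : F.Nonempty) (v : Finset α → ℤ) {N : ℤ}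

theorem le_hammingExtension_iff {c : ℤ} {A : Finset α} :
    c ≤ hammingExtension F hF v N A ↔ ∀ B ∈ F, c ≤ v B + N * #(A ∆ B) :=
  le_inf'_iff hF _

theorem hammingExtension_eq {A : Finset α} (hA : A ∈ F) (hN : 0 ≤ N)
    (hvN : ∀ B ∈ F, v A ≤ v B + N) : hammingExtension F hF v N A = v A := by
  refine le_antisymm ((inf'_le _ hA).trans_eq (by simp))
    ((le_hammingExtension_iff hF v).2 fun B hB => ?_)
  rcases eq_or_ne A B with rfl | hAB
  · simp
  · have := one_le_card_symmDiff hAB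
    nlinarith [hvN B hB]

theorem hammingExtension_submodular [Fintype α]
    (hunion : ∀ B₁ ∈ F, ∀ B₂ ∈ F, B₁ ∪ B₂ ∈ F) (hinter : ∀ B₁ ∈ F, ∀ B₂ ∈ F, B₁ ∩ B₂ ∈ F)
    (hv : ∀ B₁ ∈ F, ∀ B₂ ∈ F, v (B₁ ∪ B₂) + v (B₁ ∩ B₂) ≤ v B₁ + v B₂) (hN : 0 ≤ N)
    (A₁ A₂ : Finset α) :
    hammingExtension F hF v N (A₁ ∪ A₂) + hammingExtension F hF v N (A₁ ∩ A₂) ≤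
      hammingExtension F hF v N A₁ + hammingExtension F hF v N A₂ := by
  obtain ⟨B₁, hB₁, e₁⟩ := exists_mem_eq_inf' hF fun B => v B + N * #(A₁ ∆ B)
  obtain ⟨B₂, hB₂, e₂⟩ := exists_mem_eq_inf' hF fun B => v B + N * #(A₂ ∆ B)
  have l₁ := inf'_le (fun B => v B + N * #((A₁ ∪ A₂) ∆ B)) (hunion B₁ hB₁ B₂ hB₂)
  have l₂ := inf'_le (fun B => v B + N * #((A₁ ∩ A₂) ∆ B)) (hinter B₁ hB₁ B₂ hB₂)
  have hcard : (#((A₁ ∪ A₂) ∆ (B₁ ∪ B₂)) + #((A₁ ∩ A₂) ∆ (B₁ ∩ B₂)) : ℤ) ≤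
      #(A₁ ∆ B₁) + #(A₂ ∆ B₂) := by
    exact_mod_cast card_symmDiff_union_add_card_symmDiff_inter_le A₁ A₂ B₁ B₂
  simp only [hammingExtension] at e₁ e₂ l₁ l₂ ⊢
  nlinarith [hv B₁ hB₁ B₂ hB₂]

end HammingExtension

theorem isLinearMap_sum_apply {ι : Type*} (A : Finset ι) :
    IsLinearMap ℝ fun y : ι → ℝ => ∑ i ∈ A, y i :=
  ⟨fun _ _ => sum_add_distrib, fun c x => (mul_sum A x c).symm⟩

namespace Megamatroid

variable {d : ℕ} (M : Megamatroid d)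

theorem exists_submodular_extension (c : ℤ) :
    ∃ g : Finset (Fin d) → ℤ, (∀ A B, g (A ∪ B) + g (A ∩ B) ≤ g A + g B) ∧
      (∀ A, M.rk A ≠ ⊤ → M.rk A = g A) ∧ ∀ A, M.rk A = ⊤ → c ≤ g A := by
  classical
  set F := univ.filter fun B => M.rk B ≠ ⊤
  have hmemF : ∀ {B}, B ∈ F ↔ M.rk B ≠ ⊤ := by simp [F]
  have hF : F.Nonempty := ⟨univ, hmemF.2 M.rk_univ_ne_top⟩
  set v : Finset (Fin d) → ℤ := fun B => (M.rk B).untopD 0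
  have hv : ∀ {B}, M.rk B ≠ ⊤ → M.rk B = v B := fun h => by
    obtain ⟨z, hz⟩ := WithTop.ne_top_iff_exists.1 h
    simp [v, ← hz]
  obtain ⟨R, hR⟩ := Finite.exists_le fun B => |v B|
  have hR₀ : 0 ≤ R := (abs_nonneg _).trans (hR ∅)
  -- The penalty `2 * R + |c|` exceeds both `v A - v B` on `F` and `c - v B`.
  have hN : 0 ≤ 2 * R + |c| := by positivity
  have hlattice : ∀ {B₁ B₂}, B₁ ∈ F → B₂ ∈ F →
      B₁ ∪ B₂ ∈ F ∧ B₁ ∩ B₂ ∈ F ∧ v (B₁ ∪ B₂) + v (B₁ ∩ B₂) ≤ v B₁ + v B₂ := fun h₁ h₂ => by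
    obtain ⟨hU, hI, hle⟩ := M.submodular _ _ (hmemF.1 h₁) (hmemF.1 h₂)
    rw [hv hU, hv hI, hv (hmemF.1 h₁), hv (hmemF.1 h₂)] at hle
    exact ⟨hmemF.2 hU, hmemF.2 hI, by exact_mod_cast hle⟩
  refine ⟨hammingExtension F hF v (2 * R + |c|), hammingExtension_submodular hF v
    (fun _ h₁ _ h₂ => (hlattice h₁ h₂).1) (fun _ h₁ _ h₂ => (hlattice h₁ h₂).2.1)
    (fun _ h₁ _ h₂ => (hlattice h₁ h₂).2.2) hN, fun A hA => ?_, fun A hA => ?_⟩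
  · rw [hammingExtension_eq hF v (hmemF.2 hA) hN fun B _ => ?_, hv hA]
    have := abs_le.1 (hR A)
    have := abs_le.1 (hR B)
    linarith [abs_nonneg c]
  · refine (le_hammingExtension_iff hF v).2 fun B hB => ?_
    have hcard := one_le_card_symmDiff fun h : A = B => hmemF.1 hB (h ▸ hA)
    have := abs_le.1 (hR B)
    have : (2 * R + |c|) * 1 ≤ (2 * R + |c|) * (#(A ∆ B) : ℤ) :=
      mul_le_mul_of_nonneg_left (by exact_mod_cast hcard) hN
    linarith [le_abs_self c]

theorem convex_megaQ : Convex ℝ (megaQ M) := by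
  simp only [megaQ, Set.ofPred_and, Set.ofPred_forall]
  exact (convex_iInter fun _ => convex_iInter fun _ =>
      convex_hyperplane (isLinearMap_sum_apply _) _).inter
    (convex_iInter fun A => convex_iInter fun _ => convex_iInter fun _ =>
      convex_halfSpace_le (isLinearMap_sum_apply A) _)

theorem isClosed_megaQ : IsClosed (megaQ M) := by
  simp only [megaQ, Set.ofPred_and, Set.ofPred_forall]
  exact (isClosed_iInter fun _ => isClosed_iInter fun _ =>
      isClosed_eq (by fun_prop) continuous_const).inter
    (isClosed_iInter fun _ => isClosed_iInter fun _ => isClosed_iInter fun _ =>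
      isClosed_le (by fun_prop) continuous_const)

theorem le_rk_of_mem_megaQ {y : Fin d → ℝ} (hy : y ∈ megaQ M) {A : Finset (Fin d)} {c : ℤ}
    (hc : (c : ℝ) ≤ ∑ i ∈ A, y i) : (c : WithTop ℤ) ≤ M.rk A := by
  induction h : M.rk A with
  | top => exact le_top
  | coe z => exact WithTop.coe_le_coe.2 (by exact_mod_cast hc.trans (hy.2 A z h))

theorem exists_mem_megaQ_forall_le_sum {ι : Type*} [Finite ι] (X : ι → Finset (Fin d))
    (hX : IsChain (· ⊆ ·) (Set.range X)) (ρ : ι → ℤ) (hρ : ∀ j, (ρ j : WithTop ℤ) ≤ M.rk (X j)) :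
    ∃ y ∈ megaQ M, ∀ j, (ρ j : ℝ) ≤ ∑ i ∈ X j, y i := by
  obtain ⟨c, hc⟩ := Finite.exists_le ρ
  obtain ⟨g, hsub, hfin, htop⟩ := M.exists_submodular_extension c
  have hg₀ : g ∅ = 0 := by
    simpa [M.rk_empty] using (hfin ∅ (by simp [M.rk_empty])).symm
  have hC : IsChain (· ⊆ ·) (insert univ (Set.range X)) :=
    hX.insert fun B _ _ => Or.inr (subset_univ B)
  obtain ⟨y, hle, htight⟩ := exists_le_of_submodular_of_isChain hg₀ hsub hC
  refine ⟨fun i => y i, ⟨fun z hz => ?_, fun A z hz => ?_⟩, fun j => ?_⟩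
  · have : g univ = z := by exact_mod_cast (hfin univ (hz ▸ WithTop.coe_ne_top)).symm.trans hz
    beta_reduce
    exact_mod_cast (htight univ (Set.mem_insert _ _)).trans this
  · have : g A = z := by exact_mod_cast (hfin A (hz ▸ WithTop.coe_ne_top)).symm.trans hz
    beta_reduce
    exact_mod_cast (hle A).trans this.le
  · have hρg : ρ j ≤ g (X j) := by
      by_cases h : M.rk (X j) = ⊤
      · exact (hc j).trans (htop _ h)
      · exact WithTop.coe_le_coe.1 (hfin _ h ▸ hρ j)
    beta_reduce
    exact_mod_cast hρg.trans (htight (X j) (Set.mem_insert_of_mem _ ⟨j, rfl⟩)).ge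

end Megamatroid

theorem sum_ite_forall_le_rk_eq_zero {d : ℕ} {ι κ : Type*} [Fintype ι] [Fintype κ]
    (M : κ → Megamatroid d) (a : κ → ℤ) (hzero : ∑ m, a m • indFn (megaQ (M m)) = 0)
    (X : ι → Finset (Fin d)) (hX : IsChain (· ⊆ ·) (Set.range X)) (ρ : ι → ℤ) :
    ∑ m, a m * (if ∀ j, (ρ j : WithTop ℤ) ≤ (M m).rk (X j) then 1 else 0) = 0 := by
  classical
  set H : Set (Fin d → ℝ) := {y | ∀ j, (ρ j : ℝ) ≤ ∑ i ∈ X j, y i}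
  have hH : Convex ℝ H ∧ IsClosed H := by
    simp only [H, Set.ofPred_forall]
    exact ⟨convex_iInter fun _ => convex_halfSpace_ge (isLinearMap_sum_apply _) _,
      isClosed_iInter fun _ => isClosed_le continuous_const (by fun_prop)⟩
  have hne : ∀ m, (megaQ (M m) ∩ H).Nonempty ↔ ∀ j, (ρ j : WithTop ℤ) ≤ (M m).rk (X j) :=
    fun m => ⟨fun ⟨_, hyQ, hyH⟩ j => (M m).le_rk_of_mem_megaQ hyQ (hyH j),
      (M m).exists_mem_megaQ_forall_le_sum X hX ρ⟩
  simp only [← hne]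
  refine euler_sum_eq_zero_of_isClosed a _ (fun m => (M m).convex_megaQ.inter hH.1)
    (fun m => (M m).isClosed_megaQ.inter hH.2) fun y => ?_
  have hy := congrFun hzero y
  simp only [Finset.sum_apply, Pi.smul_apply, smul_eq_mul, Pi.zero_apply, indFn] at hy
  simp only [Set.inter_indicator_one, Pi.mul_apply, ← mul_assoc, ← sum_mul]
  rw [show ∑ m, a m * (megaQ (M m)).indicator 1 y = 0 from hy, zero_mul]

theorem s_valuative_general (d : ℕ) (n : ℕ) (M : Fin n → Megamatroid d)
    (a : Fin n → ℤ)
    (hzero : (∑ m, a m • indFn (megaQ (M m))) = 0)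
    (k : ℕ) (X : Fin (k + 1) → Finset (Fin d)) (rv : Fin (k + 1) → ℤ)
    (hX : StrictMono X) :
    (∑ m, a m *
        (if ∀ j : Fin (k + 1), (M m).rk (X j) = (rv j : WithTop ℤ) then 1 else 0)) = 0 := by
  -- `convert` only reconciles the `Decidable` instance of the `if` (`Nat.decidableForallFin`).
  convert sum_ite_forall_eq_eq_zero a (fun m j => (M m).rk (X j))
    (sum_ite_forall_le_rk_eq_zero M a hzero X hX.monotone.isChain_range) rv

/-- The function `s_{X̲,r̲}` is valuative: if `∑ m, a_m [Q(rk_m)] = 0` for megamatroids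
of common rank `r`, then `∑ m, a_m s_{X̲,r̲}(rk_m) = 0`, for every chain
`∅ ⊂ X_1 ⊂ ⋯ ⊂ X_{k+1} = {1,…,d}` and integer vector `r̲` with last entry `r`. -/
theorem s_valuative (d : ℕ) (r : ℤ) (n : ℕ) (M : Fin n → Megamatroid d)
    (hrank : ∀ m, (M m).rk Finset.univ = (r : WithTop ℤ))
    (a : Fin n → ℤ)
    (hzero : (∑ m, a m • indFn (megaQ (M m))) = 0)
    (k : ℕ) (X : Fin (k + 1) → Finset (Fin d)) (rv : Fin (k + 1) → ℤ)
    (hX : StrictMono X) (hX0 : X 0 ≠ ∅) (hXlast : X (Fin.last k) = Finset.univ)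
    (hrv : rv (Fin.last k) = r) :
    (∑ m, a m *
        (if ∀ j : Fin (k + 1), (M m).rk (X j) = (rv j : WithTop ℤ) then 1 else 0)) = 0 :=
  s_valuative_general d n M a hzero k X rv hX
end

section
/- Let d ≥ 1 and r ≥ 0, and let f be a valuative ℤ-valued function on the set of polymatroids of rank r on {1,…,d}. Then there exist integers c_{(X̲,r̲)}, indexed by the pairs (X̲,r̲) where X̲ is a maximal chain of length d in {1,…,d} and r̲ = (r_1,…,r_d) is an integer vector with 0 ≤ r_1 ≤ r_2 ≤ ⋯ ≤ r_d = r, such that for every polymatroid rk of rank r on {1,…,d}, f(rk) = Σ_{(X̲,r̲)} c_{(X̲,r̲)} · s_{X̲,r̲}(rk). -/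
open scoped BigOperators

attribute [local instance] Classical.propDecidable

/-- A polymatroid rank function of rank `r` on the ground set `{1,…,d}` (modeled as `Fin d`). -/
def IsPolymatroid (d r : ℕ) (rk : Finset (Fin d) → ℕ) : Prop :=
  rk ∅ = 0 ∧ (∀ A B : Finset (Fin d), A ⊆ B → rk A ≤ rk B) ∧
    (∀ A B : Finset (Fin d), rk (A ∪ B) + rk (A ∩ B) ≤ rk A + rk B) ∧
    rk Finset.univ = r

/-- A matroid rank function of rank `r` on `{1,…,d}`. -/
def IsMatroid (d r : ℕ) (rk : Finset (Fin d) → ℕ) : Prop :=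
  IsPolymatroid d r rk ∧ ∀ x : Fin d, rk {x} ≤ 1

/-- The base polytope `Q(rk)`. -/
def polyQ {d : ℕ} (rk : Finset (Fin d) → ℕ) : Set (Fin d → ℝ) :=
  {y | ∑ i, y i = (rk Finset.univ : ℝ) ∧
    ∀ A : Finset (Fin d), ∑ i ∈ A, y i ≤ (rk A : ℝ)}

/-- `P_M(d,r)`: the ℤ-module spanned by the indicator functions of base polytopes
of matroids of rank `r` on `{1,…,d}`. -/
def PMmod (d r : ℕ) : Submodule ℤ ((Fin d → ℝ) → ℤ) :=
  Submodule.span ℤ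
    {f | ∃ rk : Finset (Fin d) → ℕ, IsMatroid d r rk ∧ f = indFn (polyQ rk)}

/-- `P_PM(d,r)`: the ℤ-module spanned by the indicator functions of base polytopes
of polymatroids of rank `r` on `{1,…,d}`. -/
def PPMmod (d r : ℕ) : Submodule ℤ ((Fin d → ℝ) → ℤ) :=
  Submodule.span ℤ
    {f | ∃ rk : Finset (Fin d) → ℕ, IsPolymatroid d r rk ∧ f = indFn (polyQ rk)}

/-- An element of `𝔭_PM(d,r)`: a chain `∅ ⊂ X_1 ⊂ ⋯ ⊂ X_{len+1} = {1,…,d}` of length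
`len+1 ≤ d` together with integers `0 ≤ r_1 < ⋯ < r_{len+1} = r`. -/
structure PMPair (d r : ℕ) where
  len : ℕ
  hlen : len < d
  X : Fin (len + 1) → Finset (Fin d)
  rv : Fin (len + 1) → ℤ
  X_mono : StrictMono X
  X_zero : X 0 ≠ ∅
  X_last : X (Fin.last len) = Finset.univ
  rv_mono : StrictMono rv
  rv_zero : 0 ≤ rv 0
  rv_last : rv (Fin.last len) = (r : ℤ)

/-- An element of `𝔭_M(d,r)`: an element of `𝔭_PM(d,r)` additionally satisfying
`0 < |X_1|−r_1 < ⋯ < |X_{k−1}|−r_{k−1} ≤ |X_k|−r_k` (conditions vacuous when `k = 1`). -/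
structure MPair (d r : ℕ) extends PMPair d r where
  slack_pos : 1 ≤ len → 0 < ((X 0).card : ℤ) - rv 0
  slack_strict : ∀ i j : Fin (len + 1), i < j → (j : ℕ) < len →
    ((X i).card : ℤ) - rv i < ((X j).card : ℤ) - rv j
  slack_last : 1 ≤ len →
    ((X ⟨len - 1, by omega⟩).card : ℤ) - rv ⟨len - 1, by omega⟩ ≤
      ((X (Fin.last len)).card : ℤ) - rv (Fin.last len)

/-- The polytope `R_M(X̲,r̲)`. -/
def RMset {d r : ℕ} (p : MPair d r) : Set (Fin d → ℝ) :=
  {y | (∀ i, 0 ≤ y i ∧ y i ≤ 1) ∧ ∑ i, y i = (r : ℝ) ∧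
    ∀ j, ∑ i ∈ p.X j, y i ≤ (p.rv j : ℝ)}

/-- The polytope `R_PM(X̲,r̲)`. -/
def RPMset {d r : ℕ} (p : PMPair d r) : Set (Fin d → ℝ) :=
  {y | (∀ i, 0 ≤ y i) ∧ ∑ i, y i = (r : ℝ) ∧
    ∀ j, ∑ i ∈ p.X j, y i ≤ (p.rv j : ℝ)}

/-!
Fix a chain `𝒞` of nonempty proper subsets of `E = {1,…,d}`. Replacing `rk A` (for `A ≠ ∅`) by
the least value of `rk` on the members of `𝒞 ∪ {E}` containing `A` gives a polymatroid
`chainRank 𝒞 rk` whose base polytope is cut out by `y ≥ 0`, `y(E) = r` and `y(S) ≤ rk S` for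
`S ∈ 𝒞` only. These polytopes satisfy the inclusion–exclusion relation
`[Q(rk)] = ∑_𝒞 (-1)^(d + 1 + |𝒞|) [Q(chainRank 𝒞 rk)]`.
To check it at a point `y ≥ 0` with `y(E) = r`, put `e A = y(A) - rk A`, which is supermodular.
The right-hand side then counts, with signs, the chains of `e`-nonpositive sets. Splitting off the
top element of each chain reduces this count to an alternating sum over the sets all of whose
subsets are `e`-nonpositive. That sum vanishes unless every subset is `e`-nonpositive, since
toggling an element outside a maximiser of `e` is a sign-reversing involution.

Because `f` is valuative, the relation gives `f rk = ∑_𝒞 ± f (chainRank 𝒞 rk)`. Each term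
depends only on the values of `rk` along `𝒞`, and hence on its values along any maximal chain
through `𝒞`. One such maximal chain comes from sorting `E` by the number of members of `𝒞` that
omit each element.
-/

open Finset

section Chains

variable {α : Type*} [DecidableEq α]

noncomputable def chainsBelow (P : Finset α → Prop) [DecidablePred P] (B : Finset α) :
    Finset (Finset (Finset α)) :=
  (B.ssubsets.filter P).powerset.filter fun c => IsChain (· ⊆ ·) (c : Set (Finset α))

variable {P : Finset α → Prop} [DecidablePred P] {B : Finset α} {c : Finset (Finset α)}

theorem mem_chainsBelow :
    c ∈ chainsBelow P B ↔ (∀ S ∈ c, S ⊂ B ∧ P S) ∧ IsChain (· ⊆ ·) (c : Set (Finset α)) := by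
  simp [chainsBelow, subset_iff]

theorem IsChain.sup_mem (hc : IsChain (· ⊆ ·) (c : Set (Finset α))) (hne : c.Nonempty) :
    c.sup id ∈ c := by
  rw [← sup'_eq_sup hne]
  refine sup'_mem (c : Set (Finset α)) (fun S hS T hT => ?_) c hne id fun S hS => hS
  rcases hc.total hS hT with h | h
  · rwa [sup_eq_right.mpr h]
  · rwa [sup_eq_left.mpr h]

theorem sum_chainsBelow {M : Type*} [AddCommMonoid M] (g : Finset (Finset α) → M) :
    ∑ c ∈ chainsBelow P B, g c =
      g ∅ + ∑ Y ∈ B.ssubsets.filter P, ∑ c ∈ chainsBelow P Y, g (insert Y c) := by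
  have hempty : ∅ ∈ chainsBelow P B := by simp [mem_chainsBelow]
  have htop : ∀ c ∈ (chainsBelow P B).erase ∅, c.sup id ∈ c := by
    intro c hc
    rw [mem_erase, mem_chainsBelow] at hc
    exact hc.2.2.sup_mem (nonempty_iff_ne_empty.mpr hc.1)
  rw [← add_sum_erase _ _ hempty, sum_sigma']
  congr 1
  refine sum_nbij' (fun c => ⟨c.sup id, c.erase (c.sup id)⟩) (fun x => insert x.1 x.2)
    (fun c hc => ?_) (fun x hx => ?_) (fun c hc => insert_erase (htop c hc)) (fun x hx => ?_)
    (fun c hc => by rw [insert_erase (htop c hc)])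
  · have hc' := mem_chainsBelow.mp (mem_of_mem_erase hc)
    simp only [mem_sigma, mem_filter, mem_ssubsets, mem_chainsBelow, mem_erase]
    refine ⟨hc'.1 _ (htop c hc), fun S hS => ⟨?_, (hc'.1 S hS.2).2⟩, hc'.2.mono (by simp)⟩
    exact ssubset_of_subset_of_ne (le_sup (f := id) hS.2) hS.1
  · simp only [mem_sigma, mem_filter, mem_ssubsets, mem_chainsBelow] at hx
    obtain ⟨⟨hYB, hY⟩, hmem, hchain⟩ := hx
    simp only [mem_erase, mem_chainsBelow, ne_eq, insert_ne_empty, not_false_eq_true,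
      true_and, mem_insert, forall_eq_or_imp, coe_insert]
    refine ⟨⟨⟨hYB, hY⟩, fun S hS => ⟨(hmem S hS).1.trans hYB, (hmem S hS).2⟩⟩, ?_⟩
    exact hchain.insert fun S hS _ => Or.inr (hmem S hS).1.subset
  · simp only [mem_sigma, mem_chainsBelow] at hx
    have hbelow : ∀ S ∈ x.2, S ⊂ x.1 := fun S hS => (hx.2.1 S hS).1
    have htop' : (insert x.1 x.2).sup id = x.1 :=
      sup_insert.trans (sup_eq_left.mpr (Finset.sup_le fun S hS => (hbelow S hS).subset))
    simp only [htop', erase_insert fun h => (hbelow x.1 h).ne rfl]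

theorem sum_neg_one_pow_card_eq_zero_of_insert_erase_mem {J : Finset (Finset α)} (x : α)
    (hins : ∀ Z ∈ J, insert x Z ∈ J) (hera : ∀ Z ∈ J, Z.erase x ∈ J) :
    ∑ Z ∈ J, (-1 : ℤ) ^ #Z = 0 := by
  refine sum_involution (fun Z _ => if x ∈ Z then Z.erase x else insert x Z) ?_ ?_ ?_ ?_
  · intro Z _
    split_ifs with hx
    · rw [← card_erase_add_one hx, pow_succ]; ring
    · rw [card_insert_of_notMem hx, pow_succ]; ring
  · intro Z _ _
    split_ifs with hx
    · exact fun h => notMem_erase x Z (by rw [h]; exact hx)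
    · exact fun h => hx (h ▸ mem_insert_self x Z)
  · intro Z hZ
    split_ifs
    exacts [hera Z hZ, hins Z hZ]
  · intro Z _
    by_cases hx : x ∈ Z <;> simp [hx]

theorem sum_ssubsets_neg_one_pow_card (hB : B.Nonempty) :
    ∑ Z ∈ B.ssubsets, (-1 : ℤ) ^ #Z = -(-1) ^ #B := by
  rw [ssubsets, sum_erase_eq_sub (mem_powerset_self B),
    sum_powerset_neg_one_pow_card_of_nonempty hB, zero_sub]

end Chains

section Supermodular

variable {α β : Type*}

def NonposBelow [Zero β] [LE β] (e : Finset α → β) (Z : Finset α) : Prop := ∀ A ⊆ Z, e A ≤ 0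

theorem NonposBelow.mono [Zero β] [LE β] {e : Finset α → β} {Z Z' : Finset α}
    (h : NonposBelow e Z) (hZ : Z' ⊆ Z) : NonposBelow e Z' := fun A hA => h A (hA.trans hZ)

variable [DecidableEq α] [AddCommGroup β] [LinearOrder β] [IsOrderedAddMonoid β]
  {e : Finset α → β}

theorem NonposBelow.insert (he : ∀ A B, e A + e B ≤ e (A ∪ B) + e (A ∩ B))
    {B M Z : Finset α} {x : α} (hmax : ∀ A ⊆ B, e A ≤ e M)
    (hxM : x ∉ M) (hMB : M ⊆ B) (hxZB : insert x Z ⊆ B) (hZ : NonposBelow e Z) :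
    NonposBelow e (insert x Z) := by
  intro A hA
  have hunion : e (M ∪ A) ≤ e M := hmax _ (union_subset hMB (hA.trans hxZB))
  have hinter : e (M ∩ A) ≤ 0 := by
    refine hZ _ fun a ha => ?_
    rw [mem_inter] at ha
    exact (mem_insert.mp (hA ha.2)).resolve_left fun h => hxM (h ▸ ha.1)
  exact le_of_add_le_add_left ((he M A).trans (add_le_add hunion hinter))

theorem sum_ssubsets_nonposBelow (he : ∀ A B, e A + e B ≤ e (A ∪ B) + e (A ∩ B))
    {B : Finset α} (hB : B.Nonempty) (heB : e B ≤ 0) :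
    ∑ Z ∈ B.ssubsets.filter (NonposBelow e), (-1 : ℤ) ^ #Z =
      if NonposBelow e B then -(-1) ^ #B else 0 := by
  split_ifs with hBe
  · rw [filter_true_of_mem fun Z hZ => hBe.mono (mem_ssubsets.mp hZ).subset,
      sum_ssubsets_neg_one_pow_card hB]
  obtain ⟨M, hMB, hmax⟩ := exists_max_image B.powerset e ⟨∅, empty_mem_powerset B⟩
  simp only [mem_powerset] at hMB hmax
  have heM : 0 < e M := by
    obtain ⟨A, hAB, hA⟩ := not_forall₂.mp hBe
    exact (not_le.mp hA).trans_le (hmax A hAB)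
  obtain ⟨x, hxB, hxM⟩ := exists_of_ssubset
    (ssubset_of_subset_of_ne hMB fun h => (h ▸ heM).not_ge heB)
  refine sum_neg_one_pow_card_eq_zero_of_insert_erase_mem x (fun Z hZ => ?_) (fun Z hZ => ?_) <;>
    rw [mem_filter, mem_ssubsets] at hZ ⊢
  · have hins : NonposBelow e (insert x Z) :=
      hZ.2.insert he hmax hxM hMB (insert_subset hxB hZ.1.subset)
    exact ⟨ssubset_of_subset_of_ne (insert_subset hxB hZ.1.subset) fun h => hBe (h ▸ hins),
      hins⟩
  · exact ⟨(erase_subset x Z).trans_ssubset hZ.1, hZ.2.mono (erase_subset x Z)⟩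

theorem sum_chainsBelow_neg_one_pow_card (he : ∀ A B, e A + e B ≤ e (A ∪ B) + e (A ∩ B))
    (he0 : e ∅ ≤ 0) {B : Finset α} (hB : B.Nonempty) :
    ∑ c ∈ chainsBelow (fun S => S.Nonempty ∧ e S ≤ 0) B, (-1 : ℤ) ^ #c =
      ∑ Z ∈ B.ssubsets.filter (NonposBelow e), (-1 : ℤ) ^ #Z := by
  induction B using strongInduction with | H B ih => ?_
  have hinner : ∀ Y ∈ B.ssubsets.filter (fun S => S.Nonempty ∧ e S ≤ 0),
      ∑ c ∈ chainsBelow (fun S => S.Nonempty ∧ e S ≤ 0) Y, (-1 : ℤ) ^ #(insert Y c) =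
        if NonposBelow e Y then (-1) ^ #Y else 0 := by
    intro Y hY
    rw [mem_filter, mem_ssubsets] at hY
    have hcard : ∀ c ∈ chainsBelow (fun S => S.Nonempty ∧ e S ≤ 0) Y,
        (-1 : ℤ) ^ #(insert Y c) = -(-1) ^ #c := by
      intro c hc
      have hYc : Y ∉ c := fun h => ((mem_chainsBelow.mp hc).1 Y h).1.ne rfl
      rw [card_insert_of_notMem hYc, pow_succ, mul_neg_one]
    rw [sum_congr rfl hcard, sum_neg_distrib, ih Y hY.1 hY.2.1,
      sum_ssubsets_nonposBelow he hY.2.1 hY.2.2]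
    split_ifs <;> simp
  have hsplit : B.ssubsets.filter (NonposBelow e) =
      insert ∅ ((B.ssubsets.filter fun S => S.Nonempty ∧ e S ≤ 0).filter (NonposBelow e)) := by
    ext Z
    simp only [mem_filter, mem_ssubsets, mem_insert]
    constructor
    · rintro ⟨hZB, hZ⟩
      rcases Z.eq_empty_or_nonempty with rfl | hZne
      exacts [Or.inl rfl, Or.inr ⟨⟨hZB, hZne, hZ Z subset_rfl⟩, hZ⟩]
    · rintro (rfl | ⟨⟨hZB, -⟩, hZ⟩)
      exacts [⟨hB.empty_ssubset, fun A hA => subset_empty.mp hA ▸ he0⟩, ⟨hZB, hZ⟩]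
  rw [sum_chainsBelow, sum_congr rfl hinner, ← sum_filter, hsplit, sum_insert (by simp)]
  rfl

theorem sum_chainsBelow_univ_mul_ite [Fintype α] [Nonempty α]
    (he : ∀ A B, e A + e B ≤ e (A ∪ B) + e (A ∩ B)) (he0 : e ∅ ≤ 0) (heuniv : e univ ≤ 0) :
    ∑ c ∈ chainsBelow Finset.Nonempty univ,
        (-1 : ℤ) ^ (Fintype.card α + 1 + #c) * (if ∀ S ∈ c, e S ≤ 0 then 1 else 0) =
      if NonposBelow e univ then 1 else 0 := by
  have hfilter : (chainsBelow Finset.Nonempty univ).filter (fun c => ∀ S ∈ c, e S ≤ 0) =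
      chainsBelow (fun S => S.Nonempty ∧ e S ≤ 0) univ := by
    ext c
    simp only [mem_filter, mem_chainsBelow]
    grind
  simp_rw [mul_ite, mul_one, mul_zero, pow_add _ (_ + 1)]
  rw [← sum_filter, hfilter, ← mul_sum, sum_chainsBelow_neg_one_pow_card he he0 univ_nonempty,
    sum_ssubsets_nonposBelow he univ_nonempty heuniv, card_univ]
  split_ifs
  · rw [mul_neg, ← pow_add, add_right_comm, ← two_mul, pow_succ, pow_mul]
    norm_num
  · rw [mul_zero]

end Supermodular

section ChainRank

variable {α : Type*} [Fintype α] [DecidableEq α]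

def chainRank (c : Finset (Finset α)) (rk : Finset α → ℕ) (A : Finset α) : ℕ :=
  if A = ∅ then 0 else ((insert univ c).filter (A ⊆ ·)).inf' ⟨univ, by simp⟩ rk

variable {c : Finset (Finset α)} {rk : Finset α → ℕ} {A B : Finset α}

@[simp]
theorem chainRank_empty : chainRank c rk ∅ = 0 := if_pos rfl

theorem chainRank_le {S : Finset α} (hS : S ∈ insert univ c) (hAS : A ⊆ S) :
    chainRank c rk A ≤ rk S := by
  unfold chainRank
  split_ifs
  exacts [Nat.zero_le _, inf'_le _ (mem_filter.mpr ⟨hS, hAS⟩)]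

theorem exists_chainRank_eq (hA : A.Nonempty) :
    ∃ S ∈ insert univ c, A ⊆ S ∧ chainRank c rk A = rk S := by
  obtain ⟨S, hS, heq⟩ := exists_mem_eq_inf' ⟨univ, by simp⟩ rk
    (s := (insert univ c).filter (A ⊆ ·))
  rw [mem_filter] at hS
  exact ⟨S, hS.1, hS.2, by rw [chainRank, if_neg hA.ne_empty, heq]⟩

theorem chainRank_mono : Monotone (chainRank c rk) := by
  intro A B hAB
  rcases A.eq_empty_or_nonempty with rfl | hA
  · simp
  obtain ⟨S, hS, hBS, heq⟩ := exists_chainRank_eq (c := c) (rk := rk) (hA.mono hAB)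
  exact heq ▸ chainRank_le hS (hAB.trans hBS)

theorem chainRank_union_le (hc : IsChain (· ⊆ ·) (c : Set (Finset α))) :
    chainRank c rk (A ∪ B) ≤ max (chainRank c rk A) (chainRank c rk B) := by
  rcases A.eq_empty_or_nonempty with rfl | hA
  · simp
  rcases B.eq_empty_or_nonempty with rfl | hB
  · simp
  obtain ⟨SA, hSA, hASA, hA⟩ := exists_chainRank_eq (c := c) (rk := rk) hA
  obtain ⟨SB, hSB, hBSB, hB⟩ := exists_chainRank_eq (c := c) (rk := rk) hB
  have hc' : IsChain (· ⊆ ·) ((insert univ c : Finset (Finset α)) : Set (Finset α)) := by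
    rw [coe_insert]
    exact hc.insert fun S _ _ => Or.inr (subset_univ S)
  rcases hc'.total hSA hSB with h | h
  · exact le_max_of_le_right (hB ▸ chainRank_le hSB (union_subset (hASA.trans h) hBSB))
  · exact le_max_of_le_left (hA ▸ chainRank_le hSA (union_subset hASA (hBSB.trans h)))

theorem chainRank_univ [Nonempty α] : chainRank c rk univ = rk univ := by
  obtain ⟨S, -, hS, heq⟩ := exists_chainRank_eq (c := c) (rk := rk) univ_nonempty
  rw [heq, univ_subset_iff.mp hS]

theorem chainRank_congr {rk' : Finset α → ℕ} (h : ∀ S ∈ insert univ c, rk S = rk' S) :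
    chainRank c rk = chainRank c rk' := by
  funext A
  unfold chainRank
  split_ifs
  · rfl
  · exact inf'_congr _ rfl fun S hS => h S (mem_filter.mp hS).1

end ChainRank

section BasePolytope

variable {d r : ℕ} {rk : Finset (Fin d) → ℕ}

theorem isPolymatroid_chainRank [NeZero d] {c : Finset (Finset (Fin d))}
    (hc : IsChain (· ⊆ ·) (c : Set (Finset (Fin d)))) (hr : rk univ = r) :
    IsPolymatroid d r (chainRank c rk) := by
  refine ⟨chainRank_empty, fun A B => (chainRank_mono ·), fun A B => ?_, chainRank_univ.trans hr⟩
  have hinter : chainRank c rk (A ∩ B) ≤ min (chainRank c rk A) (chainRank c rk B) :=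
    le_min (chainRank_mono inter_subset_left) (chainRank_mono inter_subset_right)
  have := add_le_add (chainRank_union_le (rk := rk) (A := A) (B := B) hc) hinter
  rwa [max_add_min] at this

theorem nonneg_of_mem_polyQ (hle : ∀ A, rk A ≤ rk univ) {y : Fin d → ℝ} (hy : y ∈ polyQ rk)
    (i : Fin d) : 0 ≤ y i := by
  have hsplit := sum_erase_add univ y (mem_univ i)
  have herase := hy.2 (univ.erase i)
  have hrk : (rk (univ.erase i) : ℝ) ≤ rk univ := by exact_mod_cast hle _
  linarith [hy.1]

theorem mem_polyQ_chainRank [NeZero d] {c : Finset (Finset (Fin d))} (hr : rk univ = r)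
    (y : Fin d → ℝ) :
    y ∈ polyQ (chainRank c rk) ↔
      (∀ i, 0 ≤ y i) ∧ ∑ i, y i = r ∧ ∀ S ∈ c, ∑ i ∈ S, y i ≤ rk S := by
  have hsum_iff : (∑ i, y i = (chainRank c rk univ : ℝ)) ↔ ∑ i, y i = r := by
    rw [chainRank_univ, hr]
  refine ⟨fun hy => ⟨nonneg_of_mem_polyQ (fun A => chainRank_mono (subset_univ A)) hy,
    hsum_iff.mp hy.1, fun S hS => ?_⟩, fun ⟨hnonneg, hsum, hle⟩ => ⟨hsum_iff.mpr hsum, ?_⟩⟩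
  · exact (hy.2 S).trans (by exact_mod_cast chainRank_le (mem_insert_of_mem hS) subset_rfl)
  · intro A
    rcases A.eq_empty_or_nonempty with rfl | hA
    · simp
    obtain ⟨S, hS, hAS, heq⟩ := exists_chainRank_eq (c := c) (rk := rk) hA
    rw [heq]
    refine (sum_le_sum_of_subset_of_nonneg hAS fun i _ _ => hnonneg i).trans ?_
    rcases mem_insert.mp hS with rfl | hS
    · rw [hsum, hr]
    · exact hle S hS

theorem indFn_polyQ_eq_sum_chainRank [NeZero d] (hrk : IsPolymatroid d r rk) :
    indFn (polyQ rk) = ∑ c ∈ chainsBelow Finset.Nonempty univ,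
      (-1 : ℤ) ^ (d + 1 + #c) • indFn (polyQ (chainRank c rk)) := by
  obtain ⟨hrk0, hmono, hsub, hr⟩ := hrk
  funext y
  rw [Finset.sum_apply]
  simp only [Pi.smul_apply, smul_eq_mul, indFn, Set.indicator_apply, mem_polyQ_chainRank hr]
  by_cases hy : (∀ i, 0 ≤ y i) ∧ ∑ i, y i = r
  swap
  · have hnot : y ∉ polyQ rk := fun hmem =>
      hy ⟨nonneg_of_mem_polyQ (hmono · _ (subset_univ _)) hmem, hr ▸ hmem.1⟩
    rw [if_neg hnot]
    exact (sum_eq_zero fun c _ => by rw [if_neg fun h => hy ⟨h.1, h.2.1⟩, mul_zero]).symm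
  set e : Finset (Fin d) → ℝ := fun A => ∑ i ∈ A, y i - rk A
  have he : ∀ A B, e A + e B ≤ e (A ∪ B) + e (A ∩ B) := by
    intro A B
    have := sum_union_inter (s₁ := A) (s₂ := B) (f := y)
    have : ((rk (A ∪ B) + rk (A ∩ B) : ℕ) : ℝ) ≤ (rk A + rk B : ℕ) := by
      exact_mod_cast hsub A B
    push_cast at this
    simp only [e]
    linarith
  have hmem : y ∈ polyQ rk ↔ NonposBelow e univ :=
    ⟨fun h A _ => sub_nonpos.mpr (h.2 A),
      fun h => ⟨by rw [hr, hy.2], fun A => sub_nonpos.mp (h A (subset_univ A))⟩⟩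
  have hmem_c : ∀ c : Finset (Finset (Fin d)),
      (∀ S ∈ c, ∑ i ∈ S, y i ≤ rk S) ↔ ∀ S ∈ c, e S ≤ 0 := by
    simp [e]
  have heuniv : e univ ≤ 0 := by simp [e, hy.2, hr]
  simp only [hy, implies_true, true_and, hmem_c, hmem]
  rw [← sum_chainsBelow_univ_mul_ite he (by simp [e, hrk0]) heuniv, Fintype.card_fin]

end BasePolytope

section Valuative

variable {d r : ℕ}

def IsValuative (d r : ℕ) (f : (Finset (Fin d) → ℕ) → ℤ) : Prop :=
  ∀ (n : ℕ) (rks : Fin n → Finset (Fin d) → ℕ) (a : Fin n → ℤ),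
    (∀ m, IsPolymatroid d r (rks m)) →
      (∑ m, a m • indFn (polyQ (rks m))) = 0 → (∑ m, a m * f (rks m)) = 0

theorem IsValuative.eq_sum_of_indFn_eq {f : (Finset (Fin d) → ℕ) → ℤ} (hf : IsValuative d r f)
    {ι : Type*} (s : Finset ι) {rk : Finset (Fin d) → ℕ} (rks : ι → Finset (Fin d) → ℕ)
    (a : ι → ℤ) (hrk : IsPolymatroid d r rk) (hrks : ∀ i ∈ s, IsPolymatroid d r (rks i))
    (h : indFn (polyQ rk) = ∑ i ∈ s, a i • indFn (polyQ (rks i))) :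
    f rk = ∑ i ∈ s, a i * f (rks i) := by
  have hreindex : ∀ {M : Type} [AddCommMonoid M] (g : ι → M),
      ∑ k, g (s.equivFin.symm k) = ∑ i ∈ s, g i := fun g =>
    (s.equivFin.symm.sum_comp fun i => g i).trans (sum_coe_sort s g)
  have := hf (#s + 1) (Fin.cons rk fun k => rks (s.equivFin.symm k))
    (Fin.cons (-1) fun k => a (s.equivFin.symm k))
    (Fin.cases hrk fun k => hrks _ (s.equivFin.symm k).2)
    (by rw [Fin.sum_univ_succ]
        simp only [Fin.cons_zero, Fin.cons_succ]
        rw [hreindex fun i => a i • indFn (polyQ (rks i)), ← h, neg_one_smul, neg_add_cancel])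
  rw [Fin.sum_univ_succ] at this
  simp only [Fin.cons_zero, Fin.cons_succ] at this
  rw [hreindex fun i => a i * f (rks i)] at this
  linarith

theorem IsValuative.eq_sum_chainRank [NeZero d] {f : (Finset (Fin d) → ℕ) → ℤ}
    (hf : IsValuative d r f) {rk : Finset (Fin d) → ℕ} (hrk : IsPolymatroid d r rk) :
    f rk = ∑ c ∈ chainsBelow Finset.Nonempty univ, (-1) ^ (d + 1 + #c) * f (chainRank c rk) :=
  hf.eq_sum_of_indFn_eq _ _ _ hrk
    (fun _ hc => isPolymatroid_chainRank (mem_chainsBelow.mp hc).2 hrk.2.2.2)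
    (indFn_polyQ_eq_sum_chainRank hrk)

end Valuative

section MaximalChain

def chainKey {α : Type*} [DecidableEq α] (c : Finset (Finset α)) (i : α) : ℕ :=
  #(c.filter (i ∉ ·))

theorem chainKey_lt_chainKey {α : Type*} [DecidableEq α] {c : Finset (Finset α)}
    (hc : IsChain (· ⊆ ·) (c : Set (Finset α))) {S : Finset α} (hS : S ∈ c) {i a : α}
    (hi : i ∈ S) (ha : a ∉ S) : chainKey c i < chainKey c a := by
  refine card_lt_card ((ssubset_iff_of_subset fun T hT => ?_).mpr ⟨S, ?_⟩)
  · rw [mem_filter] at hT ⊢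
    refine ⟨hT.1, fun haT => hT.2 ?_⟩
    rcases hc.total hS hT.1 with h | h
    exacts [h hi, absurd (h haT) ha]
  · simp [hS, hi, ha]

theorem map_sort_Iic_eq {n : ℕ} {β : Type*} [LinearOrder β] (key : Fin n → β)
    {S : Finset (Fin n)} (hkey : ∀ i ∈ S, ∀ a ∉ S, key i < key a) {j : Fin n}
    (hj : #S = j + 1) : (Iic j).map (Tuple.sort key).toEmbedding = S := by
  refine eq_of_subset_of_card_le (fun a ha => ?_) (by simp [hj])
  obtain ⟨t, ht, rfl⟩ := mem_map.mp ha
  by_contra hta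
  have hbefore : S.map (Tuple.sort key).symm.toEmbedding ⊆ Iio t := by
    intro u hu
    obtain ⟨i, hi, rfl⟩ := mem_map.mp hu
    rw [mem_Iio]
    by_contra! hle
    have := Tuple.monotone_sort key hle
    simp only [Function.comp_apply, Equiv.toEmbedding_apply, Equiv.apply_symm_apply] at this
    exact (hkey i hi _ hta).not_ge this
  have := card_le_card hbefore
  rw [card_map, Fin.card_Iio, hj] at this
  rw [mem_Iic] at ht
  omega

variable {d : ℕ}

def maxChainThrough (c : Finset (Finset (Fin d))) (j : Fin d) : Finset (Fin d) :=
  (Iic j).map (Tuple.sort (chainKey c)).toEmbedding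

variable {c : Finset (Finset (Fin d))}

theorem card_maxChainThrough (j : Fin d) : #(maxChainThrough c j) = j + 1 := by
  simp [maxChainThrough]

theorem strictMono_maxChainThrough : StrictMono (maxChainThrough c) :=
  fun _ _ h => map_ssubset_map.mpr (Iic_ssubset_Iic.mpr h)

theorem maxChainThrough_eq (hc : IsChain (· ⊆ ·) (c : Set (Finset (Fin d))))
    {S : Finset (Fin d)} (hS : S ∈ insert univ c) {j : Fin d} (hj : #S = j + 1) :
    maxChainThrough c j = S := by
  rcases mem_insert.mp hS with rfl | hS
  · exact eq_univ_of_card _ (by rw [card_maxChainThrough, ← hj, card_univ])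
  · exact map_sort_Iic_eq _ (fun _ hi _ ha => chainKey_lt_chainKey hc hS hi ha) hj

/-- A maximal chain `X` has its member of cardinality `k` at position `k - 1`, so for
`v j = rk (X j)` this agrees with `rk` on the members of `X`. -/
def rankAlong [NeZero d] (v : Fin d → ℤ) (S : Finset (Fin d)) : ℕ :=
  (v ⟨#S - 1, by
    have := (card_le_univ S).trans_eq (Fintype.card_fin d)
    have := NeZero.pos d
    omega⟩).toNat

theorem chainRank_rankAlong [NeZero d] (hc : c ∈ chainsBelow Finset.Nonempty univ)
    (rk : Finset (Fin d) → ℕ) :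
    chainRank c (rankAlong fun j => rk (maxChainThrough c j)) = chainRank c rk := by
  rw [mem_chainsBelow] at hc
  refine chainRank_congr fun S hS => ?_
  have hSne : S.Nonempty := by
    rcases mem_insert.mp hS with rfl | hS
    exacts [univ_nonempty, (hc.1 S hS).2]
  have hcard : #S = (#S - 1) + 1 := (Nat.sub_add_cancel hSne.card_pos).symm
  rw [rankAlong, maxChainThrough_eq hc.2 hS hcard, Int.toNat_natCast]

end MaximalChain

section IndicatorSum

variable {d : ℕ} {Q : (Fin d → Finset (Fin d)) × (Fin d → ℤ) → Prop}
  (X : Fin d → Finset (Fin d)) (rk : Finset (Fin d) → ℕ) (g : (Fin d → ℤ) → ℤ)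

theorem ite_mul_ite_eq_zero_of_ne {p₀ p : Subtype Q}
    (hp₀ : p₀.1 = (X, fun j => (rk (X j) : ℤ))) (hp : p ≠ p₀) :
    (if X = p.1.1 then g p.1.2 else 0) *
      (if ∀ j, (rk (p.1.1 j) : ℤ) = p.1.2 j then 1 else 0) = 0 := by
  by_cases hX : X = p.1.1
  · refine mul_eq_zero_of_right _ (if_neg fun hv => hp (Subtype.ext ?_))
    rw [hp₀]
    exact Prod.ext hX.symm (funext fun j => by simp [← hv j, hX])
  · rw [if_neg hX, zero_mul]

theorem finsum_ite_mul_ite (hQ : Q (X, fun j => rk (X j))) :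
    ∑ᶠ p : Subtype Q, (if X = p.1.1 then g p.1.2 else 0) *
      (if ∀ j, (rk (p.1.1 j) : ℤ) = p.1.2 j then 1 else 0) = g fun j => rk (X j) := by
  rw [finsum_eq_single _ ⟨_, hQ⟩ fun p hp => ite_mul_ite_eq_zero_of_ne X rk g rfl hp]
  simp

theorem hasFiniteSupport_ite_mul_ite (hQ : Q (X, fun j => rk (X j))) :
    Function.HasFiniteSupport fun p : Subtype Q => (if X = p.1.1 then g p.1.2 else 0) *
      (if ∀ j, (rk (p.1.1 j) : ℤ) = p.1.2 j then 1 else 0) :=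
  (Set.finite_singleton (⟨_, hQ⟩ : Subtype Q)).subset fun _ hp =>
    by_contra fun hne => hp (ite_mul_ite_eq_zero_of_ne X rk g rfl hne)

end IndicatorSum

/-- Corollary `cor maximal chains`: every valuative ℤ-valued function on polymatroids of
rank `r` on `{1,…,d}` is an integral linear combination of the functions `s_{X̲,r̲}` where
`X̲` is a maximal chain (so `|X_j| = j`) and `0 ≤ r_1 ≤ ⋯ ≤ r_d = r`. -/
theorem valuative_eq_sum_s_maximal_chains (d r : ℕ) (hd : 1 ≤ d)
    (f : (Finset (Fin d) → ℕ) → ℤ)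
    (hval : ∀ (n : ℕ) (rks : Fin n → Finset (Fin d) → ℕ) (a : Fin n → ℤ),
      (∀ m, IsPolymatroid d r (rks m)) →
      (∑ m, a m • indFn (polyQ (rks m))) = 0 →
      (∑ m, a m * f (rks m)) = 0) :
    ∃ c : {p : (Fin d → Finset (Fin d)) × (Fin d → ℤ) //
        StrictMono p.1 ∧ (∀ j : Fin d, (p.1 j).card = (j : ℕ) + 1) ∧
        p.1 ⟨d - 1, by omega⟩ = Finset.univ ∧
        Monotone p.2 ∧ 0 ≤ p.2 ⟨0, hd⟩ ∧ p.2 ⟨d - 1, by omega⟩ = (r : ℤ)} → ℤ,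
      ∀ rk : Finset (Fin d) → ℕ, IsPolymatroid d r rk →
        f rk = ∑ᶠ p, c p * (if ∀ j : Fin d, (rk (p.1.1 j) : ℤ) = p.1.2 j then 1 else 0) := by
  have : NeZero d := ⟨by omega⟩
  set g : Finset (Finset (Fin d)) → (Fin d → ℤ) → ℤ :=
    fun c v => (-1) ^ (d + 1 + #c) * f (chainRank c (rankAlong v))
  refine ⟨fun p => ∑ c ∈ chainsBelow Finset.Nonempty univ,
    if maxChainThrough c = p.1.1 then g c p.1.2 else 0, fun rk hrk => ?_⟩
  have hindex : ∀ c ∈ chainsBelow Finset.Nonempty univ, StrictMono (maxChainThrough c) ∧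
      (∀ j, #(maxChainThrough c j) = (j : ℕ) + 1) ∧ maxChainThrough c ⟨d - 1, by omega⟩ = univ ∧
      Monotone (fun j => (rk (maxChainThrough c j) : ℤ)) ∧
      0 ≤ (rk (maxChainThrough c ⟨0, hd⟩) : ℤ) ∧
      (rk (maxChainThrough c ⟨d - 1, by omega⟩) : ℤ) = r := by
    intro c hc
    have hlast := maxChainThrough_eq (mem_chainsBelow.mp hc).2 (mem_insert_self univ c)
      (j := ⟨d - 1, by omega⟩) (by simp; omega)
    exact ⟨strictMono_maxChainThrough, card_maxChainThrough, hlast,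
      fun i j hij => Nat.cast_le.mpr (hrk.2.1 _ _ (strictMono_maxChainThrough.monotone hij)),
      by positivity, by rw [hlast, hrk.2.2.2]⟩
  simp_rw [sum_mul]
  rw [IsValuative.eq_sum_chainRank hval hrk, finsum_sum_comm]
  · refine sum_congr rfl fun c hc => ?_
    rw [finsum_ite_mul_ite _ rk (g c) (hindex c hc)]
    simp only [g, chainRank_rankAlong hc]
  · exact fun c hc => hasFiniteSupport_ite_mul_ite _ rk (g c) (hindex c hc)
end
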